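/- arXiv:2507.16560 — 8 statements merged into one kernel-verified Lean document; each statement's English description precedes it below -/
import Mathlib

section
/- For every y ∈ X and every α > 0, the equation α x + Γ J[x] = α y has a unique solution x_α(y) ∈ X (written x_α(y) = α(αI + Γ J)^{-1} y). Moreover this solution satisfies ‖x_α(y)‖_X = ‖J[x_α(y)]‖_{X*} ≤ ‖y‖_X. -/
open NormedSpace Filter Topology

private lemma aux_le_of_small {a b c : ℝ} (hc : 0 ≤ c)
    (h : ∀ t : ℝ, 0 < t → t ≤ 1 → a ≤ b + t * c) : a ≤ b := by
  by_contra hab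
  push_neg at hab
  have hc1 : (0:ℝ) < c + 1 := by linarith
  set t : ℝ := min 1 ((a - b) / (2 * (c + 1))) with ht
  have ht0 : 0 < t := lt_min one_pos (div_pos (by linarith) (by linarith))
  have ht1 : t ≤ 1 := min_le_left _ _
  have h2 : t ≤ (a - b) / (2 * (c + 1)) := min_le_right _ _
  have h3 := h t ht0 ht1
  have htc : t * c ≤ (a - b) / 2 := by
    have h4 : t * c ≤ ((a - b) / (2 * (c + 1))) * c :=
      mul_le_mul_of_nonneg_right h2 hc
    have h5 : ((a - b) / (2 * (c + 1))) * c ≤ (a - b) / 2 := by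
      rw [div_mul_eq_mul_div, div_le_div_iff₀ (by linarith) two_pos]
      nlinarith
    linarith
  linarith

private lemma lsc_exists_min {β : Type*} [TopologicalSpace β] [T2Space β] {s : Set β}
    (hs : IsCompact s) (hne : s.Nonempty) {φ : β → ℝ} (hφ : LowerSemicontinuous φ) :
    ∃ x ∈ s, ∀ z ∈ s, φ x ≤ φ z := by
  haveI hns : Nonempty s := hne.to_subtype
  have hcl : IsClosed s := hs.isClosed
  set K : s → Set β := fun x => s ∩ φ ⁻¹' Set.Iic (φ (x : β)) with hK
  have hKcl : ∀ x : s, IsClosed (K x) := fun x => hcl.inter (hφ.isClosed_preimage _)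
  have hKcp : ∀ x : s, IsCompact (K x) :=
    fun x => hs.of_isClosed_subset (hKcl x) Set.inter_subset_left
  have hmemK : ∀ (x : s) (z : β), z ∈ K x ↔ z ∈ s ∧ φ z ≤ φ (x : β) := fun x z => Iff.rfl
  have hKne : ∀ x : s, (K x).Nonempty := fun x => ⟨x, (hmemK x x).mpr ⟨x.2, le_rfl⟩⟩
  have hdir : Directed (· ⊇ ·) K := by
    intro a b
    rcases le_total (φ (a : β)) (φ (b : β)) with h | h
    · refine ⟨a, Set.Subset.rfl, fun z hz => ?_⟩
      obtain ⟨h1, h2⟩ := (hmemK a z).mp hz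
      exact (hmemK b z).mpr ⟨h1, le_trans h2 h⟩
    · refine ⟨b, fun z hz => ?_, Set.Subset.rfl⟩
      obtain ⟨h1, h2⟩ := (hmemK b z).mp hz
      exact (hmemK a z).mpr ⟨h1, le_trans h2 h⟩
  obtain ⟨z, hz⟩ :=
    IsCompact.nonempty_iInter_of_directed_nonempty_isCompact_isClosed K hdir hKne hKcp hKcl
  rw [Set.mem_iInter] at hz
  refine ⟨z, ((hmemK _ z).mp (hz (Classical.arbitrary s))).1,
    fun w hw => ((hmemK ⟨w, hw⟩ z).mp (hz ⟨w, hw⟩)).2⟩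

set_option maxHeartbeats 1600000 in
/-- For every `y ∈ X` and every `α > 0`, the equation
`α x + Γ J[x] = α y` has a unique solution `x_α(y)`, and this solution satisfies
`‖x_α(y)‖ = ‖J[x_α(y)]‖ ≤ ‖y‖`. -/
theorem stmt0
    {X : Type*} [NormedAddCommGroup X] [NormedSpace ℝ X] [CompleteSpace X]
    [UniformConvexSpace (StrongDual ℝ X)]
    (hRefl : Function.Surjective ⇑(NormedSpace.inclusionInDoubleDual ℝ X))
    (J : X → StrongDual ℝ X)
    (hJ_pair : ∀ x : X, J x x = ‖x‖ ^ 2)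
    (hJ_norm : ∀ x : X, ‖J x‖ = ‖x‖)
    (hJ_bij : Function.Bijective J)
    (hJ_demi : ∀ (u : ℕ → X) (x : X), Tendsto u atTop (𝓝 x) →
      ∀ v : X, Tendsto (fun n => (J (u n)) v) atTop (𝓝 ((J x) v)))
    (hJ_mono : ∀ x y : X, x ≠ y → 0 < (J x - J y) (x - y))
    (Γ : StrongDual ℝ X →L[ℝ] X)
    (hΓ_sym : ∀ f g : StrongDual ℝ X, f (Γ g) = g (Γ f))
    (hΓ_nonneg : ∀ f : StrongDual ℝ X, 0 ≤ f (Γ f)) :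
    ∀ y : X, ∀ α : ℝ, 0 < α →
      (∃! x : X, α • x + Γ (J x) = α • y) ∧
      (∀ x : X, α • x + Γ (J x) = α • y → ‖x‖ = ‖J x‖ ∧ ‖x‖ ≤ ‖y‖) := by
  intro y α hα
  classical
  -- the norm bound part
  have hbound : ∀ x : X, α • x + Γ (J x) = α • y → ‖x‖ = ‖J x‖ ∧ ‖x‖ ≤ ‖y‖ := by
    intro x hx
    have h1 : α * ‖x‖ ^ 2 + (J x) (Γ (J x)) = α * (J x) y := by
      have h := congrArg (fun z => (J x) z) hx
      simpa [map_add, map_smul, smul_eq_mul, hJ_pair x, mul_comm] using h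
    have h2 : (J x) y ≤ ‖x‖ * ‖y‖ := by
      have := (J x).le_opNorm y
      rw [hJ_norm] at this
      exact (le_abs_self _).trans (by simpa [Real.norm_eq_abs] using this)
    refine ⟨(hJ_norm x).symm, ?_⟩
    by_contra hcon
    push_neg at hcon
    have hx0 : 0 < ‖x‖ := lt_of_le_of_lt (norm_nonneg y) hcon
    nlinarith [hΓ_nonneg (J x), mul_le_mul_of_nonneg_left h2 hα.le,
      mul_lt_mul_of_pos_left hcon (mul_pos hα hx0)]
  -- the convex functional on the dual
  obtain ⟨Φ, hΦdef⟩ : ∃ Φ : StrongDual ℝ X → ℝ,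
      ∀ f : StrongDual ℝ X, Φ f = α / 2 * ‖f‖ ^ 2 + 2⁻¹ * f (Γ f) - α * f y :=
    ⟨_, fun f => rfl⟩
  -- affine minorants
  have hminor : ∀ (f : StrongDual ℝ X) (x : X) (g : StrongDual ℝ X),
      α * f x + f (Γ g) - α * f y - α / 2 * ‖x‖ ^ 2 - 2⁻¹ * g (Γ g) ≤ Φ f := by
    intro f x g
    have h1 : f x ≤ ‖f‖ * ‖x‖ := by
      exact (le_abs_self _).trans (by simpa [Real.norm_eq_abs] using f.le_opNorm x)
    have h3 : (f - g) (Γ (f - g)) = f (Γ f) - 2 * f (Γ g) + g (Γ g) := by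
      simp only [map_sub, ContinuousLinearMap.sub_apply]
      rw [← hΓ_sym f g]; ring
    have h2 : 0 ≤ (f - g) (Γ (f - g)) := hΓ_nonneg _
    rw [h3] at h2
    rw [hΦdef]
    nlinarith [sq_nonneg (‖f‖ - ‖x‖), mul_le_mul_of_nonneg_left h1 hα.le]
  -- near attainment with g = f
  have hsup : ∀ (f : StrongDual ℝ X) (δ : ℝ), 0 < δ →
      ∃ x : X, α / 2 * ‖f‖ ^ 2 ≤ α * f x - α / 2 * ‖x‖ ^ 2 + δ := by
    intro f δ hδ
    by_cases hf0 : f = 0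
    · exact ⟨0, by simp [hf0]; positivity⟩
    · have hfn : 0 < ‖f‖ := norm_pos_iff.mpr hf0
      have hr : ‖f‖ - δ / (α * ‖f‖) < ‖f‖ := by
        have : 0 < δ / (α * ‖f‖) := div_pos hδ (by positivity)
        linarith
      obtain ⟨x₁, hx₁, hfx₁⟩ := f.exists_lt_apply_of_lt_opNorm hr
      rw [Real.norm_eq_abs] at hfx₁
      obtain ⟨x₂, hx₂, hfx₂⟩ : ∃ x₂ : X, ‖x₂‖ ≤ 1 ∧ ‖f‖ - δ / (α * ‖f‖) < f x₂ := by
        rcases le_or_gt 0 (f x₁) with h | h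
        · exact ⟨x₁, hx₁.le, by rwa [abs_of_nonneg h] at hfx₁⟩
        · refine ⟨-x₁, by simpa using hx₁.le, ?_⟩
          rw [map_neg]
          rwa [abs_of_neg h] at hfx₁
      refine ⟨‖f‖ • x₂, ?_⟩
      have hfx : ‖f‖ * (‖f‖ - δ / (α * ‖f‖)) ≤ f (‖f‖ • x₂) := by
        rw [map_smul, smul_eq_mul]
        exact mul_le_mul_of_nonneg_left hfx₂.le hfn.le
      have hnx : ‖(‖f‖ • x₂)‖ ≤ ‖f‖ := by
        rw [norm_smul, Real.norm_eq_abs, abs_of_nonneg hfn.le]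
        nlinarith
      have e1 : α * (‖f‖ * (‖f‖ - δ / (α * ‖f‖))) = α * ‖f‖ ^ 2 - δ := by
        field_simp
      have e2 : α * ‖f‖ ^ 2 - δ ≤ α * f (‖f‖ • x₂) := by
        rw [← e1]; exact mul_le_mul_of_nonneg_left hfx hα.le
      have e3 : ‖(‖f‖ • x₂)‖ ^ 2 ≤ ‖f‖ ^ 2 := by
        nlinarith [norm_nonneg (‖f‖ • x₂)]
      nlinarith [mul_le_mul_of_nonneg_left e3 (by linarith : (0:ℝ) ≤ α / 2)]
  -- lower semicontinuity in the weak-* topology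
  have hlsc : LowerSemicontinuous (fun f : WeakDual ℝ X => Φ (WeakDual.toStrongDual f)) := by
    intro F₀ c hc
    have hc' : c < Φ (WeakDual.toStrongDual F₀) := hc
    set g₀ : StrongDual ℝ X := WeakDual.toStrongDual F₀ with hg₀
    clear_value g₀
    have hgx : ∀ v : X, g₀ v = F₀ v := fun v => by rw [hg₀]; rfl
    obtain ⟨x, hx⟩ := hsup g₀ ((Φ g₀ - c) / 2) (half_pos (sub_pos.mpr hc'))
    set A : WeakDual ℝ X → ℝ := fun f =>
      α * f x + f (Γ g₀) - α * f y - α / 2 * ‖x‖ ^ 2 - 2⁻¹ * g₀ (Γ g₀) with hA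
    have hc1 : Continuous fun f : WeakDual ℝ X => α * f x :=
      continuous_const.mul (WeakDual.eval_continuous x)
    have hc2 : Continuous fun f : WeakDual ℝ X => f (Γ g₀) := WeakDual.eval_continuous _
    have hc3 : Continuous fun f : WeakDual ℝ X => α * f y :=
      continuous_const.mul (WeakDual.eval_continuous y)
    have hAcont : Continuous A :=
      (((hc1.add hc2).sub hc3).sub continuous_const).sub continuous_const
    have hAle : ∀ f : WeakDual ℝ X, A f ≤ Φ (WeakDual.toStrongDual f) := by
      intro f
      have h := hminor (WeakDual.toStrongDual f) x g₀
      have happ : ∀ v : X, (WeakDual.toStrongDual f) v = f v := fun v => rfl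
      rw [happ x, happ (Γ g₀), happ y] at h
      exact h
    have hAF₀ : c < A F₀ := by
      have hkey : c < α * g₀ x + g₀ (Γ g₀) - α * g₀ y - α / 2 * ‖x‖ ^ 2
          - 2⁻¹ * g₀ (Γ g₀) := by
        rw [hΦdef] at hc' hx
        linarith
      rw [hgx x, hgx y] at hkey
      nth_rewrite 1 [hgx (Γ g₀)] at hkey
      simpa only [hA] using hkey
    have hopen : IsOpen {f : WeakDual ℝ X | c < A f} := isOpen_lt continuous_const hAcont
    filter_upwards [hopen.mem_nhds hAF₀] with f hf
    exact lt_of_lt_of_le hf (hAle f)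
  -- minimize over a weak-* compact ball
  have hScomp := WeakDual.isCompact_closedBall (𝕜 := ℝ) (E := X) 0 (2 * ‖y‖)
  have h0S : (0 : WeakDual ℝ X) ∈
      (WeakDual.toStrongDual ⁻¹' Metric.closedBall (0 : StrongDual ℝ X) (2 * ‖y‖)) := by
    refine Set.mem_preimage.mpr ?_
    rw [map_zero]
    exact Metric.mem_closedBall_self (by positivity)
  obtain ⟨F₀, hF₀S, hF₀min⟩ := lsc_exists_min hScomp ⟨0, h0S⟩ hlsc
  obtain ⟨f₀, hf₀⟩ : ∃ f₀ : StrongDual ℝ X, WeakDual.toStrongDual F₀ = f₀ := ⟨_, rfl⟩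
  simp only [hf₀] at hF₀min
  -- global minimality
  have hminS : ∀ f : StrongDual ℝ X, ‖f‖ ≤ 2 * ‖y‖ → Φ f₀ ≤ Φ f := by
    intro f hf
    have hfS : (StrongDual.toWeakDual f) ∈
        (WeakDual.toStrongDual ⁻¹' Metric.closedBall (0 : StrongDual ℝ X) (2 * ‖y‖)) := by
      refine Set.mem_preimage.mpr ?_
      have he : WeakDual.toStrongDual (StrongDual.toWeakDual f) = f :=
        StrongDual.toWeakDual.symm_apply_apply f
      rw [he, Metric.mem_closedBall, dist_zero_right]
      exact hf
    have h := hF₀min _ hfS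
    have he : WeakDual.toStrongDual (StrongDual.toWeakDual f) = f :=
      StrongDual.toWeakDual.symm_apply_apply f
    rw [he] at h
    exact h
  clear hF₀min hF₀S h0S hScomp hlsc hf₀
  clear F₀
  have hmin : ∀ f : StrongDual ℝ X, Φ f₀ ≤ Φ f := by
    intro f
    by_cases hf : ‖f‖ ≤ 2 * ‖y‖
    · exact hminS f hf
    · push_neg at hf
      have h1 : Φ f₀ ≤ Φ 0 := hminS 0 (by rw [norm_zero]; positivity)
      have hΦ0 : Φ (0 : StrongDual ℝ X) = 0 := by rw [hΦdef]; simp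
      have h2 : f y ≤ ‖f‖ * ‖y‖ := by
        exact (le_abs_self _).trans (by simpa [Real.norm_eq_abs] using f.le_opNorm y)
      have hfpos : 0 < ‖f‖ := lt_of_le_of_lt (by positivity) hf
      have h4 : 0 ≤ α / 2 * ‖f‖ * (‖f‖ - 2 * ‖y‖) :=
        mul_nonneg (by positivity) (by linarith)
      have h3 : 0 ≤ Φ f := by
        rw [hΦdef]
        nlinarith [hΓ_nonneg f, mul_le_mul_of_nonneg_left h2 hα.le, h4]
      linarith
  clear hminS
  -- the candidate solution
  set xstar : X := y - α⁻¹ • Γ f₀ with hxstar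
  clear_value xstar
  -- key subgradient inequality
  have key : ∀ g : StrongDual ℝ X, g xstar ≤ 2⁻¹ * ‖f₀ + g‖ ^ 2 - 2⁻¹ * ‖f₀‖ ^ 2 := by
    intro g
    have hgx : g xstar = g y - α⁻¹ * g (Γ f₀) := by
      rw [hxstar, map_sub, map_smul, smul_eq_mul]
    have key' : α * g y - g (Γ f₀) ≤ α * (2⁻¹ * ‖f₀ + g‖ ^ 2 - 2⁻¹ * ‖f₀‖ ^ 2) := by
      apply aux_le_of_small (c := g (Γ g) / 2) (by linarith [hΓ_nonneg g])
      intro t ht0 ht1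
      have hmin' := hmin (f₀ + t • g)
      have hA : (f₀ + t • g) (Γ (f₀ + t • g)) =
          f₀ (Γ f₀) + 2 * t * g (Γ f₀) + t ^ 2 * g (Γ g) := by
        simp only [map_add, map_smul, ContinuousLinearMap.add_apply,
          ContinuousLinearMap.smul_apply, smul_eq_mul]
        rw [hΓ_sym f₀ g]; ring
      have hB : (f₀ + t • g) y = f₀ y + t * g y := by
        simp [ContinuousLinearMap.add_apply, ContinuousLinearMap.smul_apply, smul_eq_mul]
      have hN : ‖f₀ + t • g‖ ^ 2 ≤ (1 - t) * ‖f₀‖ ^ 2 + t * ‖f₀ + g‖ ^ 2 := by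
        have e : f₀ + t • g = (1 - t) • f₀ + t • (f₀ + g) := by
          ext v; simp only [ContinuousLinearMap.add_apply, ContinuousLinearMap.smul_apply, smul_eq_mul]; ring
        have hn : ‖f₀ + t • g‖ ≤ (1 - t) * ‖f₀‖ + t * ‖f₀ + g‖ := by
          rw [e]
          refine (norm_add_le _ _).trans ?_
          rw [norm_smul, norm_smul, Real.norm_eq_abs, Real.norm_eq_abs,
            abs_of_nonneg (by linarith), abs_of_nonneg ht0.le]
        nlinarith [norm_nonneg (f₀ + t • g), norm_nonneg f₀, norm_nonneg (f₀ + g),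
          mul_nonneg (mul_nonneg ht0.le (by linarith : (0:ℝ) ≤ 1 - t))
            (sq_nonneg (‖f₀‖ - ‖f₀ + g‖))]
      rw [hΦdef, hΦdef, hA, hB] at hmin'
      have hmul : t * (α * g y - g (Γ f₀)) ≤
          t * (α * (2⁻¹ * ‖f₀ + g‖ ^ 2 - 2⁻¹ * ‖f₀‖ ^ 2) + t * (g (Γ g) / 2)) := by
        nlinarith [mul_le_mul_of_nonneg_left hN (by linarith : (0:ℝ) ≤ α / 2)]
      exact (mul_le_mul_iff_right₀ ht0).mp hmul
    rw [hgx]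
    have hfin := mul_le_mul_of_nonneg_left key' (inv_nonneg.mpr hα.le)
    rw [← mul_assoc, inv_mul_cancel₀ hα.ne', one_mul] at hfin
    calc g y - α⁻¹ * g (Γ f₀) = α⁻¹ * (α * g y - g (Γ f₀)) := by
          rw [mul_sub, ← mul_assoc, inv_mul_cancel₀ hα.ne', one_mul]
      _ ≤ 2⁻¹ * ‖f₀ + g‖ ^ 2 - 2⁻¹ * ‖f₀‖ ^ 2 := hfin
  -- ‖xstar‖ ≤ ‖f₀‖
  have hxle : ∀ g : StrongDual ℝ X, g xstar ≤ ‖f₀‖ * ‖g‖ := by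
    intro g
    apply aux_le_of_small (c := ‖g‖ ^ 2 / 2) (by positivity)
    intro t ht0 ht1
    have hk := key (t • g)
    rw [ContinuousLinearMap.smul_apply, smul_eq_mul] at hk
    have hn : ‖f₀ + t • g‖ ≤ ‖f₀‖ + t * ‖g‖ := by
      refine (norm_add_le _ _).trans ?_
      rw [norm_smul, Real.norm_eq_abs, abs_of_nonneg ht0.le]
    have hmul : t * (g xstar) ≤ t * (‖f₀‖ * ‖g‖ + t * (‖g‖ ^ 2 / 2)) := by
      nlinarith [norm_nonneg (f₀ + t • g), norm_nonneg f₀,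
        mul_nonneg ht0.le (norm_nonneg g)]
    exact (mul_le_mul_iff_right₀ ht0).mp hmul
  have hxnorm_le : ‖xstar‖ ≤ ‖f₀‖ := by
    apply NormedSpace.norm_le_dual_bound ℝ xstar (norm_nonneg f₀)
    intro g
    rw [Real.norm_eq_abs, abs_le]
    constructor
    · have := hxle (-g)
      rw [ContinuousLinearMap.neg_apply] at this
      rw [norm_neg] at this
      linarith
    · exact hxle g
  -- f₀ xstar ≥ ‖f₀‖²
  have hpair_ge : ‖f₀‖ ^ 2 ≤ f₀ xstar := by
    apply aux_le_of_small (c := ‖f₀‖ ^ 2 / 2) (by positivity)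
    intro t ht0 ht1
    have hk := key ((-t) • f₀)
    rw [ContinuousLinearMap.smul_apply, smul_eq_mul] at hk
    have e : f₀ + (-t) • f₀ = (1 - t) • f₀ := by
      ext v; simp only [ContinuousLinearMap.add_apply, ContinuousLinearMap.smul_apply, smul_eq_mul]; ring
    rw [e, norm_smul, Real.norm_eq_abs, abs_of_nonneg (by linarith : (0:ℝ) ≤ 1 - t)] at hk
    have hmul : t * ‖f₀‖ ^ 2 ≤ t * (f₀ xstar + t * (‖f₀‖ ^ 2 / 2)) := by nlinarith
    exact (mul_le_mul_iff_right₀ ht0).mp hmul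
  have hpair_le : f₀ xstar ≤ ‖f₀‖ * ‖xstar‖ := by
    exact (le_abs_self _).trans (by simpa [Real.norm_eq_abs] using f₀.le_opNorm xstar)
  -- equalities
  have hnx : ‖xstar‖ = ‖f₀‖ := by
    refine le_antisymm hxnorm_le ?_
    rcases eq_or_lt_of_le (norm_nonneg f₀) with h0 | h0
    · rw [← h0]; exact norm_nonneg xstar
    · nlinarith
  have hfx : f₀ xstar = ‖xstar‖ ^ 2 := by
    rw [hnx]
    refine le_antisymm ?_ hpair_ge
    calc f₀ xstar ≤ ‖f₀‖ * ‖xstar‖ := hpair_le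
      _ = ‖f₀‖ ^ 2 := by rw [hnx]; ring
  -- identification f₀ = J xstar via strict convexity of the dual
  have hJeq : J xstar = f₀ := by
    by_cases hx0 : xstar = 0
    · have hf00 : ‖f₀‖ = 0 := by rw [← hnx, hx0, norm_zero]
      have hf0 : f₀ = 0 := norm_eq_zero.mp hf00
      rw [hf0]
      apply norm_eq_zero.mp
      rw [hJ_norm, hx0, norm_zero]
    · have hxpos : 0 < ‖xstar‖ := norm_pos_iff.mpr hx0
      have hsum : (J xstar + f₀) xstar = 2 * ‖xstar‖ ^ 2 := by
        rw [ContinuousLinearMap.add_apply, hJ_pair, hfx]; ring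
      have hle : 2 * ‖xstar‖ ^ 2 ≤ ‖J xstar + f₀‖ * ‖xstar‖ := by
        rw [← hsum]
        exact (le_abs_self _).trans
          (by simpa [Real.norm_eq_abs] using (J xstar + f₀).le_opNorm xstar)
      have hge : ‖J xstar‖ + ‖f₀‖ ≤ ‖J xstar + f₀‖ := by
        rw [hJ_norm, ← hnx]
        nlinarith
      have heq : ‖J xstar + f₀‖ = ‖J xstar‖ + ‖f₀‖ := le_antisymm (norm_add_le _ _) hge
      exact eq_of_norm_eq_of_norm_add_eq (by rw [hJ_norm, ← hnx]) heq
  -- xstar solves the equation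
  have hsol : α • xstar + Γ (J xstar) = α • y := by
    rw [hJeq, hxstar, smul_sub, smul_smul, mul_inv_cancel₀ hα.ne', one_smul]
    abel
  refine ⟨⟨xstar, hsol, ?_⟩, hbound⟩
  intro z hz
  by_contra hne
  have hd := hJ_mono z xstar hne
  have heqz : α • z + Γ (J z) = α • xstar + Γ (J xstar) := hz.trans hsol.symm
  have heq : α • (z - xstar) + Γ (J z - J xstar) = 0 := by
    rw [smul_sub, map_sub]
    rw [← sub_eq_zero] at heqz
    calc α • z - α • xstar + (Γ (J z) - Γ (J xstar))
        = α • z + Γ (J z) - (α • xstar + Γ (J xstar)) := by abel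
      _ = 0 := heqz
  have hpaired := congrArg (fun w => (J z - J xstar) w) heq
  simp only [map_add, map_smul, smul_eq_mul, map_zero] at hpaired
  nlinarith [mul_pos hα hd, hΓ_nonneg (J z - J xstar)]
end

section
/- For each fixed α > 0, the operator (αI + Γ J)^{-1} : X → X, which sends z ∈ X to the unique x ∈ X with α x + Γ J[x] = z, is uniformly continuous on every bounded subset of X: for every bounded set S ⊆ X and every ε > 0 there exists δ > 0 such that whenever z₁, z₂ ∈ S and ‖z₁ − z₂‖_X ≤ δ, the corresponding solutions x₁, x₂ satisfy ‖x₁ − x₂‖_X ≤ ε. -/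
open NormedSpace Filter Topology

set_option maxHeartbeats 1000000 in
/-- Quantitative lemma: in a uniformly convex space `E`, if `u, v` lie in a ball of
radius `R` and `fu, fv` are (sub)duality functionals for `u, v`, then smallness of
`(fu - fv) (u - v)` forces `‖u - v‖` to be small, uniformly. -/
lemma key_uc {E : Type*} [NormedAddCommGroup E] [NormedSpace ℝ E] [UniformConvexSpace E]
    (R ε : ℝ) (hR : 0 < R) (hε : 0 < ε) :
    ∃ c : ℝ, 0 < c ∧ ∀ (u v : E) (fu fv : StrongDual ℝ E), ‖u‖ ≤ R → ‖v‖ ≤ R →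
      fu u = ‖u‖ ^ 2 → fv v = ‖v‖ ^ 2 → ‖fu‖ ≤ ‖u‖ → ‖fv‖ ≤ ‖v‖ →
      (fu - fv) (u - v) < c → ‖u - v‖ < ε := by
  obtain ⟨δ₀, hδ₀, hconv⟩ :=
    exists_forall_sphere_dist_add_le_two_sub E (div_pos hε (by positivity : (0:ℝ) < 2 * R))
  refine ⟨min (ε ^ 2 / 4) (ε ^ 2 / 16 * δ₀), by positivity, ?_⟩
  intro u v fu fv huR hvR hfuu hfvv hnu hnv hP
  by_contra hcon
  push_neg at hcon
  set a := ‖u‖ with ha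
  set b := ‖v‖ with hb
  have ha0 : 0 ≤ a := norm_nonneg _
  have hb0 : 0 ≤ b := norm_nonneg _
  have hfuv : fu v ≤ a * b := by
    calc fu v ≤ ‖fu v‖ := le_abs_self _
    _ ≤ ‖fu‖ * ‖v‖ := fu.le_opNorm v
    _ ≤ a * b := by apply mul_le_mul hnu le_rfl hb0 ha0
  have hfvu : fv u ≤ b * a := by
    calc fv u ≤ ‖fv u‖ := le_abs_self _
    _ ≤ ‖fv‖ * ‖u‖ := fv.le_opNorm u
    _ ≤ b * a := by apply mul_le_mul hnv le_rfl ha0 hb0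
  have hPval : (fu - fv) (u - v) = a ^ 2 + b ^ 2 - fv u - fu v := by
    simp only [ContinuousLinearMap.sub_apply, map_sub, hfuu, hfvv]
    ring
  -- (a-b)^2 ≤ P < ε^2/4
  have hsq : (a - b) ^ 2 ≤ (fu - fv) (u - v) := by rw [hPval]; nlinarith
  have hPc1 : (fu - fv) (u - v) < ε ^ 2 / 4 := lt_of_lt_of_le hP (min_le_left _ _)
  have htri : ε ≤ a + b := le_trans hcon (norm_sub_le u v)
  -- both norms are > ε/4
  have haε : ε / 4 < a := by nlinarith
  have hbε : ε / 4 < b := by nlinarith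
  have ha' : 0 < a := lt_trans (by positivity) haε
  have hb' : 0 < b := lt_trans (by positivity) hbε
  set u' : E := a⁻¹ • u with hu'
  set v' : E := b⁻¹ • v with hv'
  have hnu' : ‖u'‖ = 1 := by
    rw [hu', norm_smul, norm_inv, Real.norm_eq_abs, abs_of_pos ha', ← ha,
      inv_mul_cancel₀ ha'.ne']
  have hnv' : ‖v'‖ = 1 := by
    rw [hv', norm_smul, norm_inv, Real.norm_eq_abs, abs_of_pos hb', ← hb,
      inv_mul_cancel₀ hb'.ne']
  -- ‖u - v‖ ≤ a ‖u' - v'‖ + |b - a|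
  have hau : a • u' = u := by
    rw [hu', smul_smul, mul_inv_cancel₀ ha'.ne', one_smul]
  have hbv : b • v' = v := by
    rw [hv', smul_smul, mul_inv_cancel₀ hb'.ne', one_smul]
  have hdecomp : u - v = a • (u' - v') + (a - b) • v' := by
    rw [smul_sub, sub_smul, hau, hbv]
    abel
  have habs : |a - b| < ε / 2 := by
    rw [abs_lt]; constructor <;> nlinarith
  have hbound : ε ≤ a * ‖u' - v'‖ + |a - b| := by
    calc ε ≤ ‖u - v‖ := hcon
    _ = ‖a • (u' - v') + (a - b) • v'‖ := by rw [hdecomp]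
    _ ≤ ‖a • (u' - v')‖ + ‖(a - b) • v'‖ := norm_add_le _ _
    _ = a * ‖u' - v'‖ + |a - b| := by
        rw [norm_smul, norm_smul, Real.norm_eq_abs, Real.norm_eq_abs, abs_of_pos ha',
          hnv', mul_one]
  have hdist : ε / (2 * R) ≤ ‖u' - v'‖ := by
    have h1 : ε / 2 ≤ a * ‖u' - v'‖ := by nlinarith
    have h2 : a * (ε / (2 * R)) ≤ a * ‖u' - v'‖ := by
      calc a * (ε / (2 * R)) ≤ R * (ε / (2 * R)) := by
            apply mul_le_mul_of_nonneg_right huR (by positivity)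
      _ = ε / 2 := by field_simp
      _ ≤ a * ‖u' - v'‖ := h1
    exact le_of_mul_le_mul_left h2 ha'
  have hsum : ‖u' + v'‖ ≤ 2 - δ₀ := hconv hnu' hnv' hdist
  -- fu (u' + v') ≤ a * (2 - δ₀), fu u' = a, hence fu v ≤ a*b*(1 - δ₀)
  have hfu_u' : fu u' = a := by
    rw [hu', map_smul, smul_eq_mul, hfuu]
    field_simp
  have hfu_sum : fu (u' + v') ≤ a * (2 - δ₀) := by
    calc fu (u' + v') ≤ ‖fu (u' + v')‖ := le_abs_self _
    _ ≤ ‖fu‖ * ‖u' + v'‖ := fu.le_opNorm _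
    _ ≤ a * (2 - δ₀) := by
        apply mul_le_mul hnu hsum (norm_nonneg _) ha0
  have hfu_v' : fu v' ≤ a * (1 - δ₀) := by
    have : fu (u' + v') = a + fu v' := by rw [map_add, hfu_u']
    linarith [hfu_sum, this ▸ hfu_sum]
  have hfuv2 : fu v ≤ a * b * (1 - δ₀) := by
    have hv'' : fu v = b * fu v' := by
      rw [hv', map_smul, smul_eq_mul]
      field_simp
    rw [hv'']
    calc b * fu v' ≤ b * (a * (1 - δ₀)) := by
          apply mul_le_mul_of_nonneg_left hfu_v' hb0
    _ = a * b * (1 - δ₀) := by ring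
  -- conclude P ≥ ab δ₀ ≥ ε²/16 δ₀ ≥ c > P
  have hab : ε ^ 2 / 16 < a * b := by nlinarith
  have hfinal : ε ^ 2 / 16 * δ₀ ≤ (fu - fv) (u - v) := by
    rw [hPval]
    nlinarith
  have := lt_of_lt_of_le hP (min_le_right _ _)
  linarith

set_option maxHeartbeats 1000000 in
/-- For each fixed `α > 0`, the operator `(αI + Γ J)⁻¹ : X → X`,
sending `z` to the unique `x` with `α x + Γ J[x] = z`, is uniformly continuous
on every bounded subset of `X`. -/
theorem stmt1
    {X : Type*} [NormedAddCommGroup X] [NormedSpace ℝ X] [CompleteSpace X]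
    [UniformConvexSpace (StrongDual ℝ X)]
    (hRefl : Function.Surjective ⇑(NormedSpace.inclusionInDoubleDual ℝ X))
    (J : X → StrongDual ℝ X)
    (hJ_pair : ∀ x : X, J x x = ‖x‖ ^ 2)
    (hJ_norm : ∀ x : X, ‖J x‖ = ‖x‖)
    (hJ_bij : Function.Bijective J)
    (hJ_demi : ∀ (u : ℕ → X) (x : X), Tendsto u atTop (𝓝 x) →
      ∀ v : X, Tendsto (fun n => (J (u n)) v) atTop (𝓝 ((J x) v)))
    (hJ_mono : ∀ x y : X, x ≠ y → 0 < (J x - J y) (x - y))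
    (Γ : StrongDual ℝ X →L[ℝ] X)
    (hΓ_sym : ∀ f g : StrongDual ℝ X, f (Γ g) = g (Γ f))
    (hΓ_nonneg : ∀ f : StrongDual ℝ X, 0 ≤ f (Γ f))
    (huniq : ∀ α : ℝ, 0 < α → ∀ z : X, ∃! x : X, α • x + Γ (J x) = z) :
    ∀ α : ℝ, 0 < α → ∀ S : Set X, Bornology.IsBounded S →
      ∀ ε : ℝ, 0 < ε → ∃ δ : ℝ, 0 < δ ∧
        ∀ z₁ ∈ S, ∀ z₂ ∈ S, ‖z₁ - z₂‖ ≤ δ →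
          ∀ x₁ x₂ : X, α • x₁ + Γ (J x₁) = z₁ → α • x₂ + Γ (J x₂) = z₂ →
            ‖x₁ - x₂‖ ≤ ε := by
  intro α hα S hS ε hε
  -- bound on S
  obtain ⟨M₀, hM₀⟩ := hS.exists_norm_le
  set M : ℝ := max M₀ 1 with hM
  have hM1 : (1:ℝ) ≤ M := le_max_right _ _
  have hMpos : 0 < M := lt_of_lt_of_le one_pos hM1
  have hMS : ∀ z ∈ S, ‖z‖ ≤ M := fun z hz => le_trans (hM₀ z hz) (le_max_left _ _)
  set R : ℝ := M / α with hR
  have hRpos : 0 < R := div_pos hMpos hα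
  -- bound on solutions
  have hsol : ∀ z ∈ S, ∀ x : X, α • x + Γ (J x) = z → ‖x‖ ≤ R := by
    intro z hz x hx
    have h1 : J x (α • x + Γ (J x)) = J x z := by rw [hx]
    have h2 : α * ‖x‖ ^ 2 + J x (Γ (J x)) = J x z := by
      rw [← h1, map_add, map_smul, hJ_pair]
      simp [smul_eq_mul]
    have h3 : J x z ≤ ‖x‖ * M := by
      calc J x z ≤ ‖J x z‖ := le_abs_self _
      _ ≤ ‖J x‖ * ‖z‖ := (J x).le_opNorm z
      _ ≤ ‖x‖ * M := by
          rw [hJ_norm]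
          exact mul_le_mul_of_nonneg_left (hMS z hz) (norm_nonneg x)
    have h4 : α * ‖x‖ ^ 2 ≤ ‖x‖ * M := by linarith [hΓ_nonneg (J x)]
    rw [hR, le_div_iff₀ hα]
    nlinarith [norm_nonneg x]
  -- key uniform convexity constant, for target ε' on ‖J x₁ - J x₂‖
  set ε' : ℝ := ε * α / (2 * (‖Γ‖ + 1)) with hε'
  have hΓ0 : (0:ℝ) ≤ ‖Γ‖ := ContinuousLinearMap.opNorm_nonneg Γ
  have hε'pos : 0 < ε' := by positivity
  obtain ⟨c, hc, hkey⟩ := key_uc (E := StrongDual ℝ X) R ε' hRpos hε'pos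
  -- choose δ
  refine ⟨min (c * α / (2 * R + 1)) (ε * α / 2), by positivity, ?_⟩
  intro z₁ hz₁ z₂ hz₂ hzd x₁ x₂ he₁ he₂
  have hx₁ : ‖x₁‖ ≤ R := hsol z₁ hz₁ x₁ he₁
  have hx₂ : ‖x₂‖ ≤ R := hsol z₂ hz₂ x₂ he₂
  have hzd1 : ‖z₁ - z₂‖ ≤ c * α / (2 * R + 1) := le_trans hzd (min_le_left _ _)
  have hzd2 : ‖z₁ - z₂‖ ≤ ε * α / 2 := le_trans hzd (min_le_right _ _)
  -- difference of equations
  have hdiff : α • (x₁ - x₂) + Γ (J x₁ - J x₂) = z₁ - z₂ := by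
    rw [map_sub, smul_sub, ← he₁, ← he₂]; abel
  -- pair with J x₁ - J x₂
  have hpair : α * (J x₁ - J x₂) (x₁ - x₂) + (J x₁ - J x₂) (Γ (J x₁ - J x₂))
      = (J x₁ - J x₂) (z₁ - z₂) := by
    rw [← hdiff, map_add, map_smul]
    simp [smul_eq_mul]
  have hJd : ‖J x₁ - J x₂‖ ≤ 2 * R := by
    calc ‖J x₁ - J x₂‖ ≤ ‖J x₁‖ + ‖J x₂‖ := norm_sub_le _ _
    _ = ‖x₁‖ + ‖x₂‖ := by rw [hJ_norm, hJ_norm]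
    _ ≤ 2 * R := by linarith
  have hrhs : (J x₁ - J x₂) (z₁ - z₂) ≤ 2 * R * (c * α / (2 * R + 1)) := by
    calc (J x₁ - J x₂) (z₁ - z₂) ≤ ‖(J x₁ - J x₂) (z₁ - z₂)‖ := le_abs_self _
    _ ≤ ‖J x₁ - J x₂‖ * ‖z₁ - z₂‖ := (J x₁ - J x₂).le_opNorm _
    _ ≤ 2 * R * (c * α / (2 * R + 1)) := by
        apply mul_le_mul hJd hzd1 (norm_nonneg _) (by positivity)
  have hPsmall : (J x₁ - J x₂) (x₁ - x₂) < c := by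
    have h4 := hΓ_nonneg (J x₁ - J x₂)
    have h5 : α * (J x₁ - J x₂) (x₁ - x₂) ≤ 2 * R * (c * α / (2 * R + 1)) := by
      linarith
    have h6 : 2 * R * (c * α / (2 * R + 1)) < c * α := by
      have hpos : (0:ℝ) < 2 * R + 1 := by positivity
      have ht : c * α / (2 * R + 1) * (2 * R + 1) = c * α := div_mul_cancel₀ _ hpos.ne'
      have htpos : 0 < c * α / (2 * R + 1) := by positivity
      nlinarith
    nlinarith
  -- apply key lemma with fu = ι x₁, fv = ι x₂
  set fu : StrongDual ℝ (StrongDual ℝ X) := inclusionInDoubleDual ℝ X x₁ with hfu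
  set fv : StrongDual ℝ (StrongDual ℝ X) := inclusionInDoubleDual ℝ X x₂ with hfv
  have hP' : (fu - fv) (J x₁ - J x₂) = (J x₁ - J x₂) (x₁ - x₂) := by
    simp only [hfu, hfv, ContinuousLinearMap.sub_apply, map_sub, dual_def]
    ring
  have hJnorm : ‖J x₁ - J x₂‖ < ε' := by
    apply hkey (J x₁) (J x₂) fu fv
    · rw [hJ_norm]; exact hx₁
    · rw [hJ_norm]; exact hx₂
    · rw [hfu, dual_def, hJ_pair, hJ_norm]
    · rw [hfv, dual_def, hJ_pair, hJ_norm]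
    · rw [hJ_norm]; exact double_dual_bound ℝ X x₁
    · rw [hJ_norm]; exact double_dual_bound ℝ X x₂
    · rw [hP']; exact hPsmall
  -- conclude
  have hfx : x₁ - x₂ = α⁻¹ • (z₁ - z₂ - Γ (J x₁ - J x₂)) := by
    rw [← hdiff]
    rw [add_sub_cancel_right, smul_smul, inv_mul_cancel₀ hα.ne', one_smul]
  have : ‖x₁ - x₂‖ ≤ α⁻¹ * (ε * α / 2 + ‖Γ‖ * ε') := by
    rw [hfx, norm_smul, norm_inv, Real.norm_eq_abs, abs_of_pos hα]
    apply mul_le_mul_of_nonneg_left _ (by positivity)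
    calc ‖z₁ - z₂ - Γ (J x₁ - J x₂)‖ ≤ ‖z₁ - z₂‖ + ‖Γ (J x₁ - J x₂)‖ := norm_sub_le _ _
    _ ≤ ε * α / 2 + ‖Γ‖ * ε' := by
        apply add_le_add hzd2
        calc ‖Γ (J x₁ - J x₂)‖ ≤ ‖Γ‖ * ‖J x₁ - J x₂‖ := Γ.le_opNorm _
        _ ≤ ‖Γ‖ * ε' := mul_le_mul_of_nonneg_left hJnorm.le hΓ0
  calc ‖x₁ - x₂‖ ≤ α⁻¹ * (ε * α / 2 + ‖Γ‖ * ε') := this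
  _ ≤ ε := by
      rw [hε']
      rw [inv_mul_le_iff₀ hα]
      have h1 : ‖Γ‖ * (ε * α / (2 * (‖Γ‖ + 1))) ≤ ε * α / 2 := by
        rw [mul_div_assoc', div_le_div_iff₀ (by positivity) (by positivity : (0:ℝ) < 2)]
        nlinarith [mul_nonneg hε.le hα.le]
      linarith
end

section
/- The following three statements are equivalent: (i) Γ is strictly positive, i.e. ⟨x*, Γ x*⟩ > 0 for every x* ∈ X* with x* ≠ 0; (ii) for every h ∈ X, J[x_α(h)] converges weakly to 0 in X* as α → 0⁺; (iii) for every y ∈ X, x_α(y) converges strongly to 0 in X as α → 0⁺. Here, for α > 0 and y ∈ X, x_α(y) denotes the unique solution of α x + Γ J[x] = α y. -/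
set_option maxHeartbeats 1000000

open NormedSpace Filter Topology

/-- The following are equivalent:
(i) `Γ` is strictly positive;
(ii) for every `h ∈ X`, `J[x_α(h)] ⇀ 0` weakly in `X*` as `α → 0⁺`;
(iii) for every `y ∈ X`, `x_α(y) → 0` strongly in `X` as `α → 0⁺`.
Here `x_α(y) = xsol α y` is the unique solution of `α x + Γ J[x] = α y`. -/
theorem stmt2
    {X : Type*} [NormedAddCommGroup X] [NormedSpace ℝ X] [CompleteSpace X]
    [UniformConvexSpace (StrongDual ℝ X)]
    (hRefl : Function.Surjective ⇑(NormedSpace.inclusionInDoubleDual ℝ X))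
    (J : X → StrongDual ℝ X)
    (hJ_pair : ∀ x : X, J x x = ‖x‖ ^ 2)
    (hJ_norm : ∀ x : X, ‖J x‖ = ‖x‖)
    (hJ_bij : Function.Bijective J)
    (hJ_demi : ∀ (u : ℕ → X) (x : X), Tendsto u atTop (𝓝 x) →
      ∀ v : X, Tendsto (fun n => (J (u n)) v) atTop (𝓝 ((J x) v)))
    (Γ : StrongDual ℝ X →L[ℝ] X)
    (hΓ_sym : ∀ f g : StrongDual ℝ X, f (Γ g) = g (Γ f))
    (hΓ_nonneg : ∀ f : StrongDual ℝ X, 0 ≤ f (Γ f))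
    (xsol : ℝ → X → X)
    (hsol : ∀ α : ℝ, 0 < α → ∀ y : X,
      α • xsol α y + Γ (J (xsol α y)) = α • y)
    (huniq : ∀ α : ℝ, 0 < α → ∀ y x : X,
      α • x + Γ (J x) = α • y → x = xsol α y)
    (hbound : ∀ α : ℝ, 0 < α → ∀ y : X, ‖xsol α y‖ ≤ ‖y‖) :
    List.TFAE
      [ (∀ f : StrongDual ℝ X, f ≠ 0 → 0 < f (Γ f)),
        (∀ h : X, ∀ v : X,
          Tendsto (fun α : ℝ => (J (xsol α h)) v) (𝓝[>] (0:ℝ)) (𝓝 0)),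
        (∀ y : X,
          Tendsto (fun α : ℝ => xsol α y) (𝓝[>] (0:ℝ)) (𝓝 (0:X))) ] := by
  have hJ0 : J 0 = 0 := by
    have h0 : ‖J 0‖ = 0 := by rw [hJ_norm]; simp
    exact norm_eq_zero.mp h0
  -- the key energy identity: (J x_α)(Γ (J x_α)) = α * ((J x_α) y - ‖x_α‖^2)
  have hkey : ∀ α : ℝ, 0 < α → ∀ y : X,
      (J (xsol α y)) (Γ (J (xsol α y))) = α * ((J (xsol α y)) y - ‖xsol α y‖ ^ 2) := by
    intro α hα y
    have h1 := hsol α hα y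
    have h2 : Γ (J (xsol α y)) = α • (y - xsol α y) := by
      rw [smul_sub]; rw [eq_sub_iff_add_eq, add_comm]; exact h1
    rw [h2]
    rw [map_smul, smul_eq_mul, map_sub, hJ_pair]
  tfae_have 1 → 2
  · intro hpos h v
    set l : Filter ℝ := 𝓝[>] (0:ℝ) with hl
    set F : ℝ → WeakDual ℝ X := fun α => StrongDual.toWeakDual (J (xsol α h)) with hF
    have hs : IsCompact (WeakDual.toStrongDual ⁻¹' Metric.closedBall (0 : StrongDual ℝ X) ‖h‖) :=
      WeakDual.isCompact_closedBall (𝕜 := ℝ) 0 ‖h‖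
    have hmem : ∀ᶠ α in l, F α ∈ WeakDual.toStrongDual ⁻¹' Metric.closedBall (0 : StrongDual ℝ X) ‖h‖ := by
      filter_upwards [self_mem_nhdsWithin] with α (hα : (0:ℝ) < α)
      simp only [Set.mem_preimage, Metric.mem_closedBall, dist_zero_right]
      show ‖J (xsol α h)‖ ≤ ‖h‖
      rw [hJ_norm]; exact hbound α hα h
    have hclus : ∀ g ∈ WeakDual.toStrongDual ⁻¹' Metric.closedBall (0 : StrongDual ℝ X) ‖h‖,
        MapClusterPt g l F → g = (0 : WeakDual ℝ X) := by
      intro g _ hg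
      set gg : StrongDual ℝ X := WeakDual.toStrongDual g with hgg
      have happ : ∀ x : X, g x = gg x := fun x => rfl
      have hc3 : ∀ ε : ℝ, 0 < ε → gg (Γ gg) < 3 * ε := by
        intro ε hε
        set δ : ℝ := ε / (‖h‖ ^ 2 + 1) with hδdef
        have hδ : 0 < δ := by positivity
        have hev : ∀ᶠ α in l, α ∈ Set.Ioo (0:ℝ) δ :=
          Ioo_mem_nhdsGT_of_mem ⟨le_refl 0, hδ⟩
        have hfreq : ∃ᶠ α in l, |(F α) (Γ gg) - g (Γ gg)| < ε := by
          have hcont := (WeakDual.eval_continuous (𝕜 := ℝ) (E := X) (Γ gg)).tendsto g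
          have hU : ∀ᶠ w in 𝓝 g, |w (Γ gg) - g (Γ gg)| < ε := by
            have := Metric.tendsto_nhds.mp hcont ε hε
            filter_upwards [this] with w hw
            rwa [Real.dist_eq] at hw
          exact (mapClusterPt_iff_frequently.mp hg) _ hU
        obtain ⟨α, hαδ, hαU⟩ := (hev.and_frequently hfreq).exists
        obtain ⟨hα, hαlt⟩ := hαδ
        set x := xsol α h with hx
        have hFα : (F α) (Γ gg) = (J x) (Γ gg) := rfl
        -- energy bound : (J x)(Γ (J x)) ≤ α * ‖h‖^2
        have ha : (J x) (Γ (J x)) ≤ α * ‖h‖ ^ 2 := by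
          rw [hkey α hα h]
          have h1 : (J x) h ≤ ‖h‖ ^ 2 := by
            calc (J x) h ≤ ‖(J x) h‖ := le_abs_self _
              _ ≤ ‖J x‖ * ‖h‖ := (J x).le_opNorm h
              _ = ‖x‖ * ‖h‖ := by rw [hJ_norm]
              _ ≤ ‖h‖ * ‖h‖ := by
                  have := hbound α hα h
                  exact mul_le_mul_of_nonneg_right this (norm_nonneg _)
              _ = ‖h‖ ^ 2 := by ring
          have h2 : (0:ℝ) ≤ ‖x‖ ^ 2 := by positivity
          nlinarith
        -- positivity expansion
        have hexp : 0 ≤ (J x) (Γ (J x)) - 2 * ((J x) (Γ gg)) + gg (Γ gg) := by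
          have := hΓ_nonneg (J x - gg)
          have hsym := hΓ_sym gg (J x)
          simp only [map_sub, ContinuousLinearMap.sub_apply] at this
          nlinarith [this]
        have hb : gg (Γ gg) - ε < (J x) (Γ gg) := by
          rw [hFα, happ (Γ gg)] at hαU
          have := abs_lt.mp hαU
          linarith [this.1]
        have hαh : α * ‖h‖ ^ 2 < ε := by
          have h1 : α * (‖h‖ ^ 2 + 1) < δ * (‖h‖ ^ 2 + 1) := by
            apply mul_lt_mul_of_pos_right hαlt; positivity
          have h2 : δ * (‖h‖ ^ 2 + 1) = ε := by
            rw [hδdef]; field_simp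
          nlinarith [hα.le]
        nlinarith
      have hle : gg (Γ gg) ≤ 0 := by
        by_contra hcon
        push_neg at hcon
        have := hc3 (gg (Γ gg) / 3) (by linarith)
        linarith
      have hzero : gg = 0 := by
        by_contra hne
        exact absurd (hpos gg hne) (not_lt.mpr hle)
      have : WeakDual.toStrongDual g = 0 := hzero
      exact WeakDual.toStrongDual.injective (by simpa using this)
    have htend : Tendsto F l (𝓝 (0 : WeakDual ℝ X)) :=
      hs.tendsto_nhds_of_unique_mapClusterPt hmem hclus
    have := ((WeakDual.eval_continuous (𝕜 := ℝ) (E := X) v).tendsto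
      (0 : WeakDual ℝ X)).comp htend
    exact this
  tfae_have 2 → 3
  · intro h2 y
    set l : Filter ℝ := 𝓝[>] (0:ℝ) with hl
    have hnormsq : Tendsto (fun α : ℝ => ‖xsol α y‖ ^ 2) l (𝓝 0) := by
      apply squeeze_zero' (g := fun α : ℝ => (J (xsol α y)) y)
      · filter_upwards with α; positivity
      · filter_upwards [self_mem_nhdsWithin] with α (hα : (0:ℝ) < α)
        have h1 := hΓ_nonneg (J (xsol α y))
        rw [hkey α hα y] at h1
        nlinarith
      · exact h2 y y
    have hnorm : Tendsto (fun α : ℝ => ‖xsol α y‖) l (𝓝 0) := by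
      have := (Real.continuous_sqrt.tendsto 0).comp hnormsq
      simp only [Function.comp_def, Real.sqrt_zero] at this
      convert this using 2 with α
      rw [Real.sqrt_sq (norm_nonneg _)]
    exact tendsto_zero_iff_norm_tendsto_zero.mpr hnorm
  tfae_have 3 → 1
  · intro h3 f hf
    by_contra hcon
    push_neg at hcon
    have hf0 : f (Γ f) = 0 := le_antisymm hcon (hΓ_nonneg f)
    -- Γ f = 0 by Cauchy–Schwarz for the nonnegative form
    have hΓf : Γ f = 0 := by
      apply NormedSpace.eq_zero_of_forall_dual_eq_zero ℝ
      intro g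
      by_contra hb
      set t : ℝ := -(g (Γ g) + 1) / (2 * g (Γ f)) with ht
      have := hΓ_nonneg (g + t • f)
      have hsym := hΓ_sym f g
      simp only [map_add, map_smul, ContinuousLinearMap.add_apply,
        ContinuousLinearMap.smul_apply, smul_eq_mul, ContinuousLinearMap.coe_smul',
        Pi.smul_apply] at this
      rw [hsym, hf0] at this
      have hexp : 0 ≤ g (Γ g) + 2 * t * (g (Γ f)) := by nlinarith [this]
      have ht2 : 2 * t * (g (Γ f)) = -(g (Γ g) + 1) := by
        rw [ht]; field_simp
      rw [ht2] at hexp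
      linarith
    obtain ⟨y, hJy⟩ := hJ_bij.surjective f
    have hy0 : y ≠ 0 := by
      intro hy; rw [hy, hJ0] at hJy; exact hf hJy.symm
    have hfix : ∀ α : ℝ, 0 < α → xsol α y = y := by
      intro α hα
      refine (huniq α hα y y ?_).symm
      rw [hJy, hΓf]; simp
    have htend := h3 y
    have hconst : Tendsto (fun _ : ℝ => y) (𝓝[>] (0:ℝ)) (𝓝 (0:X)) := by
      apply htend.congr'
      filter_upwards [self_mem_nhdsWithin] with α (hα : (0:ℝ) < α)
      exact hfix α hα
    have : y = 0 := tendsto_nhds_unique tendsto_const_nhds hconst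
    exact hy0 this
  tfae_finish
end

section
/- Let Γ be symmetric and strictly positive, and let h : X → X be a (possibly nonlinear) mapping. Suppose that for each α > 0 there exists x_α ∈ X solving α x_α + Γ J[x_α] = α h(x_α), and that h(x_α) converges strongly to some h̄ ∈ X as α → 0⁺. Then there exists a sequence α_n → 0⁺ such that x_{α_n} converges strongly to 0 in X. -/
open NormedSpace Filter Topology

/-- Cauchy–Schwarz for the positive symmetric bilinear form `(f, g) ↦ f (Γ g)`. -/
lemma bform_cs {X : Type*} [NormedAddCommGroup X] [NormedSpace ℝ X]
    (Γ : StrongDual ℝ X →L[ℝ] X)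
    (hΓ_sym : ∀ f g : StrongDual ℝ X, f (Γ g) = g (Γ f))
    (hΓ_nn : ∀ f : StrongDual ℝ X, 0 ≤ f (Γ f))
    (f g : StrongDual ℝ X) : (f (Γ g)) ^ 2 ≤ f (Γ f) * g (Γ g) := by
  have key : ∀ t : ℝ, 0 ≤ g (Γ g) * (t * t) + (2 * f (Γ g)) * t + f (Γ f) := by
    intro t
    have := hΓ_nn (f + t • g)
    have expand : (f + t • g) (Γ (f + t • g))
        = g (Γ g) * (t * t) + (2 * f (Γ g)) * t + f (Γ f) := by
      simp only [map_add, map_smul, ContinuousLinearMap.add_apply,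
        ContinuousLinearMap.smul_apply, smul_eq_mul]
      have h1 : g (Γ f) = f (Γ g) := (hΓ_sym g f)
      rw [h1]; ring
    linarith [expand ▸ this]
  have := discrim_le_zero key
  rw [discrim] at this
  nlinarith

/-- The range of a symmetric strictly positive operator is dense. -/
lemma dens_range {X : Type*} [NormedAddCommGroup X] [NormedSpace ℝ X]
    (Γ : StrongDual ℝ X →L[ℝ] X)
    (hΓ_pos : ∀ f : StrongDual ℝ X, f ≠ 0 → 0 < f (Γ f))
    (hbar : X) : ∀ ε > 0, ∃ g : StrongDual ℝ X, ‖hbar - Γ g‖ < ε := by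
  intro ε hε
  by_contra hcon
  push_neg at hcon
  have hnotmem : hbar ∉ closure (Set.range fun g : StrongDual ℝ X => Γ g) := by
    intro hmem
    rw [Metric.mem_closure_iff] at hmem
    obtain ⟨y, ⟨g, rfl⟩, hy⟩ := hmem ε hε
    exact absurd (by rwa [dist_eq_norm] at hy) (not_lt.2 (hcon g))
  have hconv : Convex ℝ (closure (Set.range fun g : StrongDual ℝ X => Γ g)) := by
    have : (Set.range fun g : StrongDual ℝ X => Γ g) = (LinearMap.range (Γ : StrongDual ℝ X →ₗ[ℝ] X) : Set X) := by
      ext x; simp [LinearMap.mem_range]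
    rw [this]
    exact (LinearMap.range (Γ : StrongDual ℝ X →ₗ[ℝ] X)).convex.closure
  obtain ⟨f, u, hfu, hu⟩ :=
    geometric_hahn_banach_closed_point hconv isClosed_closure hnotmem
  have hu0 : 0 < u := by
    have := hfu 0 (subset_closure ⟨0, by simp⟩)
    simpa using this
  have hzero : ∀ g : StrongDual ℝ X, f (Γ g) = 0 := by
    intro g
    by_contra hne
    have ht : f (Γ ((u / f (Γ g)) • g)) < u :=
      hfu _ (subset_closure ⟨_, rfl⟩)
    have heq : f (Γ ((u / f (Γ g)) • g)) = (u / f (Γ g)) * f (Γ g) := by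
      rw [map_smul, map_smul]; simp
    rw [heq, div_mul_cancel₀ _ hne] at ht
    exact lt_irrefl _ ht
  have hfne : f ≠ 0 := by
    intro h0; rw [h0] at hu; simpa using hu.trans' hu0
  exact absurd (hzero f) (ne_of_gt (hΓ_pos f hfne))

/-- Let `Γ` be symmetric and strictly positive and `h : X → X` a
(possibly nonlinear) map. If for each `α > 0` the element `xsol α` solves
`α x + Γ J[x] = α h(x)` and `h(xsol α) → h̄` strongly as `α → 0⁺`, then there is
a sequence `αₙ → 0⁺` along which `xsol αₙ → 0` strongly in `X`. -/
theorem stmt3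
    {X : Type*} [NormedAddCommGroup X] [NormedSpace ℝ X] [CompleteSpace X]
    [UniformConvexSpace (StrongDual ℝ X)]
    (hRefl : Function.Surjective ⇑(NormedSpace.inclusionInDoubleDual ℝ X))
    (J : X → StrongDual ℝ X)
    (hJ_pair : ∀ x : X, J x x = ‖x‖ ^ 2)
    (hJ_norm : ∀ x : X, ‖J x‖ = ‖x‖)
    (hJ_bij : Function.Bijective J)
    (hJ_demi : ∀ (u : ℕ → X) (x : X), Tendsto u atTop (𝓝 x) →
      ∀ v : X, Tendsto (fun n => (J (u n)) v) atTop (𝓝 ((J x) v)))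
    (Γ : StrongDual ℝ X →L[ℝ] X)
    (hΓ_sym : ∀ f g : StrongDual ℝ X, f (Γ g) = g (Γ f))
    (hΓ_pos : ∀ f : StrongDual ℝ X, f ≠ 0 → 0 < f (Γ f))
    (h : X → X) (xsol : ℝ → X)
    (hsol : ∀ α : ℝ, 0 < α → α • xsol α + Γ (J (xsol α)) = α • h (xsol α))
    (hbar : X)
    (hconv : Tendsto (fun α : ℝ => h (xsol α)) (𝓝[>] (0:ℝ)) (𝓝 hbar)) :
    ∃ a : ℕ → ℝ, (∀ n, 0 < a n) ∧ Tendsto a atTop (𝓝 (0:ℝ)) ∧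
      Tendsto (fun n => xsol (a n)) atTop (𝓝 (0:X)) := by
  -- nonnegativity of the form
  have hnn : ∀ f : StrongDual ℝ X, 0 ≤ f (Γ f) := by
    intro f
    rcases eq_or_ne f 0 with rfl | hf
    · simp
    · exact (hΓ_pos f hf).le
  -- main limit along the filter 𝓝[>] 0
  have main : Tendsto (fun α => xsol α) (𝓝[>] (0:ℝ)) (𝓝 (0:X)) := by
    rw [NormedAddCommGroup.tendsto_nhds_zero]
    intro ε hε
    set M : ℝ := ‖hbar‖ + 1 with hMdef
    have hM : 0 < M := by positivity
    -- choose an approximation of hbar from the range of Γ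
    obtain ⟨g, hg⟩ := dens_range Γ hΓ_pos hbar (ε ^ 2 / (3 * M)) (by positivity)
    set C : ℝ := g (Γ g) with hCdef
    have hC : 0 ≤ C := hnn g
    set δ : ℝ := ε ^ 2 * ε ^ 2 / (9 * (M * M) * (C + 1)) with hδdef
    have hδ : 0 < δ := by positivity
    have ev1 : ∀ᶠ α in 𝓝[>] (0:ℝ), ‖h (xsol α)‖ < M :=
      hconv.norm.eventually_lt_const (by simp [hMdef])
    have ev2 : ∀ᶠ α in 𝓝[>] (0:ℝ), 0 < α := eventually_mem_nhdsWithin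
    have ev3 : ∀ᶠ α in 𝓝[>] (0:ℝ), ‖h (xsol α) - hbar‖ < ε ^ 2 / (3 * M) := by
      have t1 : Tendsto (fun α => ‖h (xsol α) - hbar‖) (𝓝[>] (0:ℝ)) (𝓝 0) := by
        simpa using (hconv.sub_const hbar).norm
      exact t1.eventually_lt_const (by positivity)
    have ev4 : ∀ᶠ α in 𝓝[>] (0:ℝ), α < δ :=
      (eventually_lt_nhds hδ).filter_mono nhdsWithin_le_nhds
    filter_upwards [ev1, ev2, ev3, ev4] with α h1 h2 h3 h4
    set x : X := xsol α with hxdef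
    -- pairing the resolvent equation with J x
    have e1 : α * ‖x‖ ^ 2 + (J x) (Γ (J x)) = α * (J x) (h x) := by
      have := congrArg (fun y => (J x) y) (hsol α h2)
      simpa [map_add, map_smul, ← hxdef, hJ_pair x, smul_eq_mul] using this
    have hBnn : 0 ≤ (J x) (Γ (J x)) := hnn (J x)
    have habs : ∀ v : X, |(J x) v| ≤ ‖x‖ * ‖v‖ := by
      intro v
      have := (J x).le_opNorm v
      rw [hJ_norm x] at this
      calc |(J x) v| = ‖(J x) v‖ := (Real.norm_eq_abs _).symm
        _ ≤ ‖x‖ * ‖v‖ := this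
    -- ‖x‖² ≤ ⟨Jx, h x⟩
    have sqle : ‖x‖ ^ 2 ≤ (J x) (h x) := by
      have hle : α * ‖x‖ ^ 2 ≤ α * (J x) (h x) := by linarith
      exact le_of_mul_le_mul_left hle h2
    -- ‖x‖ ≤ ‖h x‖ < M
    have hx_le : ‖x‖ ≤ ‖h x‖ := by
      have h5 : ‖x‖ ^ 2 ≤ ‖x‖ * ‖h x‖ :=
        sqle.trans ((le_abs_self _).trans (habs (h x)))
      rcases eq_or_lt_of_le (norm_nonneg x) with h0 | h0
      · rw [← h0]; exact norm_nonneg _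
      · rw [sq] at h5
        exact le_of_mul_le_mul_left h5 h0
    have hxM : ‖x‖ < M := lt_of_le_of_lt hx_le h1
    -- the form applied to Jx is O(α)
    have hB_le : (J x) (Γ (J x)) ≤ α * (M * M) := by
      have hP : (J x) (h x) ≤ ‖x‖ * ‖h x‖ := (le_abs_self _).trans (habs (h x))
      have hPM : (J x) (h x) ≤ M * M := by
        nlinarith [norm_nonneg x, norm_nonneg (h x)]
      nlinarith [sq_nonneg ‖x‖, h2.le]
    -- Cauchy–Schwarz: ⟨Jx, Γ g⟩ is small
    have hCS := bform_cs Γ hΓ_sym hnn (J x) g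
    have hsmall : |(J x) (Γ g)| < ε ^ 2 / 3 := by
      have hsq : ((J x) (Γ g)) ^ 2 < (ε ^ 2 / 3) ^ 2 := by
        have b1 : (J x) (Γ (J x)) * C ≤ (α * (M * M)) * (C + 1) := by
          have := mul_le_mul hB_le (by linarith : C ≤ C + 1) hC
            (by positivity : (0:ℝ) ≤ α * (M * M))
          linarith
        have b2 : (α * (M * M)) * (C + 1) < δ * ((M * M) * (C + 1)) := by
          have : α * ((M * M) * (C + 1)) < δ * ((M * M) * (C + 1)) := by
            apply mul_lt_mul_of_pos_right h4
            positivity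
          linarith [this]
        have b3 : δ * ((M * M) * (C + 1)) = (ε ^ 2 / 3) ^ 2 := by
          rw [hδdef]; field_simp; ring
        calc ((J x) (Γ g)) ^ 2 ≤ (J x) (Γ (J x)) * C := hCS
          _ ≤ (α * (M * M)) * (C + 1) := b1
          _ < δ * ((M * M) * (C + 1)) := b2
          _ = (ε ^ 2 / 3) ^ 2 := b3
      have habs2 : |(J x) (Γ g)| ^ 2 < (ε ^ 2 / 3) ^ 2 := by rwa [sq_abs]
      exact lt_of_pow_lt_pow_left₀ 2 (by positivity) habs2
    -- assemble the final bound
    have split : (J x) (h x)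
        = (J x) (h x - hbar) + (J x) (hbar - Γ g) + (J x) (Γ g) := by
      simp [map_sub]
    have b1 : (J x) (h x - hbar) ≤ ‖x‖ * ‖h x - hbar‖ :=
      (le_abs_self _).trans (habs _)
    have b2 : (J x) (hbar - Γ g) ≤ ‖x‖ * ‖hbar - Γ g‖ :=
      (le_abs_self _).trans (habs _)
    have b3 : (J x) (Γ g) ≤ ε ^ 2 / 3 := (le_abs_self _).trans hsmall.le
    have p1 : ‖x‖ * ‖h x - hbar‖ ≤ M * (ε ^ 2 / (3 * M)) :=
      mul_le_mul hxM.le h3.le (norm_nonneg _) hM.le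
    have p2 : ‖x‖ * ‖hbar - Γ g‖ ≤ M * (ε ^ 2 / (3 * M)) :=
      mul_le_mul hxM.le hg.le (norm_nonneg _) hM.le
    have q : M * (ε ^ 2 / (3 * M)) = ε ^ 2 / 3 := by
      field_simp
    have hfin : ‖x‖ ^ 2 < ε ^ 2 := by
      have : (J x) (h x) < ε ^ 2 := by
        rw [split]
        have hlt : (J x) (Γ g) < ε ^ 2 / 3 := lt_of_abs_lt hsmall
        linarith
      linarith
    exact lt_of_pow_lt_pow_left₀ 2 hε.le (by rwa [← sq_abs ‖x‖, abs_of_nonneg (norm_nonneg x)] at hfin)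
  -- extract a sequence
  refine ⟨fun n => ((n : ℝ) + 1)⁻¹, fun n => by positivity, ?_, ?_⟩
  · have := tendsto_one_div_add_atTop_nhds_zero_nat (𝕜 := ℝ)
    simpa [one_div] using this
  · have htend : Tendsto (fun n : ℕ => ((n : ℝ) + 1)⁻¹) atTop (𝓝[>] (0:ℝ)) := by
      apply tendsto_nhdsWithin_of_tendsto_nhds_of_eventually_within
      · have := tendsto_one_div_add_atTop_nhds_zero_nat (𝕜 := ℝ)
        simpa [one_div] using this
      · exact Eventually.of_forall fun n => Set.mem_Ioi.mpr (by positivity)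
    exact main.comp htend
end

section
/- Suppose Γ is strictly positive, i.e. ⟨x*, Γ x*⟩ > 0 for every x* ≠ 0. Then for every h ∈ X, J[x_α(h)] converges weakly to 0 in X* as α → 0⁺, where x_α(h) denotes the unique solution of α x + Γ J[x] = α h. -/
open NormedSpace Filter Topology

set_option maxHeartbeats 1000000 in
/-- If `Γ` is strictly positive then, for every `h ∈ X`,
`J[x_α(h)]` converges weakly to `0` in `X*` as `α → 0⁺`, where `x_α(h)` is the
unique solution of `α x + Γ J[x] = α h`. -/
theorem stmt11
    {X : Type*} [NormedAddCommGroup X] [NormedSpace ℝ X] [CompleteSpace X]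
    [UniformConvexSpace (StrongDual ℝ X)]
    (hRefl : Function.Surjective ⇑(NormedSpace.inclusionInDoubleDual ℝ X))
    (J : X → StrongDual ℝ X)
    (hJ_pair : ∀ x : X, J x x = ‖x‖ ^ 2)
    (hJ_norm : ∀ x : X, ‖J x‖ = ‖x‖)
    (hJ_bij : Function.Bijective J)
    (hJ_demi : ∀ (u : ℕ → X) (x : X), Tendsto u atTop (𝓝 x) →
      ∀ v : X, Tendsto (fun n => (J (u n)) v) atTop (𝓝 ((J x) v)))
    (Γ : StrongDual ℝ X →L[ℝ] X)
    (hΓ_sym : ∀ f g : StrongDual ℝ X, f (Γ g) = g (Γ f))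
    (hΓ_nonneg : ∀ f : StrongDual ℝ X, 0 ≤ f (Γ f))
    (hΓ_pos : ∀ f : StrongDual ℝ X, f ≠ 0 → 0 < f (Γ f))
    (xsol : ℝ → X → X)
    (hsol : ∀ α : ℝ, 0 < α → ∀ y : X,
      α • xsol α y + Γ (J (xsol α y)) = α • y)
    (huniq : ∀ α : ℝ, 0 < α → ∀ y x : X,
      α • x + Γ (J x) = α • y → x = xsol α y)
    (hbound : ∀ α : ℝ, 0 < α → ∀ y : X, ‖xsol α y‖ ≤ ‖y‖) :
    ∀ h : X, ∀ v : X,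
      Tendsto (fun α : ℝ => (J (xsol α h)) v) (𝓝[>] (0:ℝ)) (𝓝 0) := by
  -- Cauchy–Schwarz for the bilinear form (f, g) ↦ f (Γ g)
  have hCS : ∀ f g : StrongDual ℝ X, (f (Γ g)) ^ 2 ≤ f (Γ f) * g (Γ g) := by
    intro f g
    have key : discrim (g (Γ g)) (2 * f (Γ g)) (f (Γ f)) ≤ 0 := by
      apply discrim_le_zero
      intro t
      have h0 := hΓ_nonneg (f + t • g)
      have hsym := hΓ_sym f g
      simp only [map_add, map_smul, ContinuousLinearMap.add_apply,
        ContinuousLinearMap.coe_smul', Pi.smul_apply, smul_eq_mul] at h0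
      rw [← hsym] at h0
      nlinarith [h0]
    rw [discrim] at key
    nlinarith [key]
  -- The range of Γ is dense
  have hdense : ∀ (w : X) (ε : ℝ), 0 < ε → ∃ g : StrongDual ℝ X, ‖w - Γ g‖ < ε := by
    intro w ε hε
    by_contra hcon
    push_neg at hcon
    have hconv : Convex ℝ (closure (Set.range Γ)) := by
      have : Convex ℝ (Set.range Γ) := by
        rw [← Set.image_univ]
        exact convex_univ.linear_image (Γ : StrongDual ℝ X →ₗ[ℝ] X)
      exact this.closure
    have hw : w ∉ closure (Set.range Γ) := by
      intro hmem
      rw [Metric.mem_closure_iff] at hmem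
      obtain ⟨b, hb, hd⟩ := hmem ε hε
      obtain ⟨g, rfl⟩ := hb
      rw [dist_eq_norm] at hd
      exact absurd hd (not_lt.2 (hcon g))
    obtain ⟨f, u, hfu, huf⟩ :=
      geometric_hahn_banach_closed_point hconv isClosed_closure hw
    have hmem0 : ∀ g : StrongDual ℝ X, Γ g ∈ closure (Set.range Γ) :=
      fun g => subset_closure ⟨g, rfl⟩
    have hzero : ∀ g : StrongDual ℝ X, f (Γ g) = 0 := by
      intro g
      by_contra hne
      have ht := hfu (Γ (((u + 1) / f (Γ g)) • g)) (hmem0 _)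
      rw [map_smul, map_smul, smul_eq_mul, div_mul_cancel₀ _ hne] at ht
      linarith
    have hu0 : 0 < u := by
      have := hfu (Γ 0) (hmem0 0)
      rw [map_zero, map_zero] at this
      exact this
    have hfne : f ≠ 0 := by
      intro hf0
      rw [hf0] at huf
      simp at huf
      linarith
    have := hΓ_pos f hfne
    rw [hzero f] at this
    exact lt_irrefl 0 this
  intro h v
  rw [Metric.tendsto_nhdsWithin_nhds]
  intro ε hε
  obtain ⟨g, hg⟩ := hdense v (ε / (2 * (‖h‖ + 1))) (by positivity)
  set B := g (Γ g) with hB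
  have hB0 : 0 ≤ B := hΓ_nonneg g
  refine ⟨ε ^ 2 / (4 * (‖h‖ ^ 2 * B + 1)), by positivity, ?_⟩
  intro α hα hαδ
  simp only [Set.mem_Ioi] at hα
  rw [Real.dist_eq, sub_zero] at hαδ ⊢
  rw [abs_of_pos hα] at hαδ
  set x := xsol α h with hx
  set f := J x with hf
  have heq := hsol α hα h
  have hΓf : Γ f = α • h - α • x := by rw [← heq]; abel
  have hfx : f x = ‖x‖ ^ 2 := hJ_pair x
  have hfnorm : ‖f‖ = ‖x‖ := hJ_norm x
  have hxb : ‖x‖ ≤ ‖h‖ := hbound α hα h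
  have hfh : f h ≤ ‖h‖ ^ 2 := by
    have h1 : f h ≤ ‖f‖ * ‖h‖ := by
      have := f.le_opNorm h
      rw [Real.norm_eq_abs] at this
      exact (le_abs_self _).trans this
    rw [hfnorm] at h1
    nlinarith [norm_nonneg h, norm_nonneg x]
  have hfΓf : f (Γ f) ≤ α * ‖h‖ ^ 2 := by
    rw [hΓf, map_sub, map_smul, map_smul, smul_eq_mul, smul_eq_mul, hfx]
    nlinarith [sq_nonneg ‖x‖]
  have hCS' : (f (Γ g)) ^ 2 < (ε / 2) ^ 2 := by
    have h1 := hCS f g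
    have h2 : f (Γ f) * B ≤ (α * ‖h‖ ^ 2) * B :=
      mul_le_mul_of_nonneg_right hfΓf hB0
    have h3 : α * (‖h‖ ^ 2 * B) < (ε ^ 2 / (4 * (‖h‖ ^ 2 * B + 1))) * (‖h‖ ^ 2 * B + 1) := by
      have hpos : (0:ℝ) < ε ^ 2 / (4 * (‖h‖ ^ 2 * B + 1)) := by positivity
      have hD : (0:ℝ) ≤ ‖h‖ ^ 2 * B := mul_nonneg (sq_nonneg _) hB0
      have e1 := mul_le_mul_of_nonneg_right hαδ.le hD
      have e2 := mul_lt_mul_of_pos_left (lt_add_one (‖h‖ ^ 2 * B)) hpos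
      linarith
    have h4 : (ε ^ 2 / (4 * (‖h‖ ^ 2 * B + 1))) * (‖h‖ ^ 2 * B + 1) = ε ^ 2 / 4 := by
      field_simp
    have h5 : (ε / 2) ^ 2 = ε ^ 2 / 4 := by ring
    have h6 : (α * ‖h‖ ^ 2) * B = α * (‖h‖ ^ 2 * B) := by ring
    linarith [h1, h2]
  have hgabs : |f (Γ g)| < ε / 2 := by
    nlinarith [sq_abs (f (Γ g)), abs_nonneg (f (Γ g))]
  have hvabs : |f (v - Γ g)| < ε / 2 := by
    have h1 : |f (v - Γ g)| ≤ ‖f‖ * ‖v - Γ g‖ := by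
      have := f.le_opNorm (v - Γ g)
      rwa [Real.norm_eq_abs] at this
    rw [hfnorm] at h1
    have h2 : ‖x‖ * ‖v - Γ g‖ ≤ ‖h‖ * (ε / (2 * (‖h‖ + 1))) := by
      apply mul_le_mul hxb hg.le (norm_nonneg _) (norm_nonneg _)
    have h3 : ‖h‖ * (ε / (2 * (‖h‖ + 1))) < ε / 2 := by
      have hc : (0:ℝ) < 2 * (‖h‖ + 1) := by positivity
      rw [← mul_div_assoc, div_lt_div_iff₀ hc two_pos]
      nlinarith [norm_nonneg h]
    linarith
  have hsplit : f v = f (v - Γ g) + f (Γ g) := by rw [map_sub]; ring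
  calc |f v| ≤ |f (v - Γ g)| + |f (Γ g)| := by rw [hsplit]; exact abs_add_le _ _
    _ < ε := by linarith
end

section
/- Fix h ∈ X. Let (α_n) be a sequence of positive reals with α_n → 0, and for each n let x_n ∈ X satisfy α_n x_n + Γ J[x_n] = α_n h. If J[x_n] converges weakly to 0 in X*, then ‖x_n‖_X → 0, i.e. x_n converges strongly to 0 in X. -/
open NormedSpace Filter Topology

/-- Fix `h ∈ X`, let `αₙ > 0` with `αₙ → 0` and let `xₙ` solve
`αₙ xₙ + Γ J[xₙ] = αₙ h`. If `J[xₙ] ⇀ 0` weakly in `X*`, then `xₙ → 0`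
strongly in `X`. -/
theorem stmt12
    {X : Type*} [NormedAddCommGroup X] [NormedSpace ℝ X] [CompleteSpace X]
    [UniformConvexSpace (StrongDual ℝ X)]
    (J : X → StrongDual ℝ X)
    (hJ_pair : ∀ x : X, J x x = ‖x‖ ^ 2)
    (hJ_norm : ∀ x : X, ‖J x‖ = ‖x‖)
    (Γ : StrongDual ℝ X →L[ℝ] X)
    (hΓ_nonneg : ∀ f : StrongDual ℝ X, 0 ≤ f (Γ f))
    (h : X) (a : ℕ → ℝ) (ha : ∀ n, 0 < a n)
    (ha0 : Tendsto a atTop (𝓝 (0:ℝ)))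
    (x : ℕ → X)
    (hx : ∀ n, a n • x n + Γ (J (x n)) = a n • h)
    (hweak : ∀ v : X, Tendsto (fun n => (J (x n)) v) atTop (𝓝 0)) :
    Tendsto (fun n => ‖x n‖) atTop (𝓝 (0:ℝ)) ∧
      Tendsto x atTop (𝓝 (0:X)) := by
  have key : ∀ n, ‖x n‖ ^ 2 ≤ (J (x n)) h := by
    intro n
    have e := congrArg (J (x n)) (hx n)
    simp only [map_add, map_smul, smul_eq_mul] at e
    have h1 : a n * ‖x n‖ ^ 2 + (J (x n)) (Γ (J (x n))) = a n * (J (x n)) h := by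
      rw [← hJ_pair (x n)]; exact e
    have h2 : a n * ‖x n‖ ^ 2 ≤ a n * (J (x n)) h := by
      nlinarith [hΓ_nonneg (J (x n))]
    exact le_of_mul_le_mul_left h2 (ha n)
  have hsq : Tendsto (fun n => ‖x n‖ ^ 2) atTop (𝓝 (0:ℝ)) := by
    refine tendsto_of_tendsto_of_tendsto_of_le_of_le tendsto_const_nhds (hweak h)
      (fun n => by positivity) key
  have hnorm : Tendsto (fun n => ‖x n‖) atTop (𝓝 (0:ℝ)) := by
    have := (Real.continuous_sqrt.tendsto 0).comp hsq
    simpa only [Function.comp_def, Real.sqrt_sq (norm_nonneg _), Real.sqrt_zero] using this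
  exact ⟨hnorm, tendsto_zero_iff_norm_tendsto_zero.2 hnorm⟩
end

section
/- Suppose that for every y ∈ X, the solutions x_α(y) of α x + Γ J[x] = α y converge strongly to 0 in X as α → 0⁺. Then Γ is strictly positive, i.e. ⟨x*, Γ x*⟩ > 0 for every x* ∈ X* with x* ≠ 0. -/
open NormedSpace Filter Topology

/-- If for every `y ∈ X` the solutions `x_α(y)` of
`α x + Γ J[x] = α y` converge strongly to `0` as `α → 0⁺`, then `Γ` is
strictly positive. -/
theorem stmt13
    {X : Type*} [NormedAddCommGroup X] [NormedSpace ℝ X] [CompleteSpace X]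
    [UniformConvexSpace (StrongDual ℝ X)]
    (hRefl : Function.Surjective ⇑(NormedSpace.inclusionInDoubleDual ℝ X))
    (J : X → StrongDual ℝ X)
    (hJ_pair : ∀ x : X, J x x = ‖x‖ ^ 2)
    (hJ_norm : ∀ x : X, ‖J x‖ = ‖x‖)
    (hJ_bij : Function.Bijective J)
    (Γ : StrongDual ℝ X →L[ℝ] X)
    (hΓ_sym : ∀ f g : StrongDual ℝ X, f (Γ g) = g (Γ f))
    (hΓ_nonneg : ∀ f : StrongDual ℝ X, 0 ≤ f (Γ f))
    (xsol : ℝ → X → X)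
    (hsol : ∀ α : ℝ, 0 < α → ∀ y : X,
      α • xsol α y + Γ (J (xsol α y)) = α • y)
    (huniq : ∀ α : ℝ, 0 < α → ∀ y x : X,
      α • x + Γ (J x) = α • y → x = xsol α y)
    (htend : ∀ y : X,
      Tendsto (fun α : ℝ => xsol α y) (𝓝[>] (0:ℝ)) (𝓝 (0:X))) :
    ∀ f : StrongDual ℝ X, f ≠ 0 → 0 < f (Γ f) := by
  intro f hf
  rcases lt_or_eq_of_le (hΓ_nonneg f) with h | h
  · exact h
  exfalso
  have hff : f (Γ f) = 0 := h.symm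
  -- Step 1: Γ f = 0
  have hΓf : Γ f = 0 := by
    apply NormedSpace.eq_zero_of_forall_dual_eq_zero ℝ
    intro g
    by_contra hc
    set c := g (Γ f) with hcdef
    have key : ∀ t : ℝ, 0 ≤ g (Γ g) + 2 * t * c := by
      intro t
      have h0 := hΓ_nonneg (g + t • f)
      have hexp : (g + t • f) (Γ (g + t • f))
          = g (Γ g) + t * f (Γ g) + t * g (Γ f) + t * t * f (Γ f) := by
        simp only [map_add, map_smul, ContinuousLinearMap.add_apply,
          ContinuousLinearMap.smul_apply, smul_eq_mul]
        ring
      rw [hexp, hΓ_sym f g, hff] at h0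
      have : g (Γ g) + t * c + t * c + t * t * 0 = g (Γ g) + 2 * t * c := by ring
      linarith [h0, this ▸ h0]
    have hkey := key (-(g (Γ g) + 1) / (2 * c))
    have heq : 2 * (-(g (Γ g) + 1) / (2 * c)) * c = -(g (Γ g) + 1) := by
      field_simp
    rw [heq] at hkey
    linarith
  -- Step 2: take y with J y = f; then xsol α y = y for all α > 0
  obtain ⟨y, hy⟩ := hJ_bij.2 f
  have hxs : ∀ α : ℝ, 0 < α → xsol α y = y := by
    intro α hα
    refine (huniq α hα y y ?_).symm
    rw [hy, hΓf, add_zero]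
  -- Step 3: limit uniqueness gives y = 0
  have hy0 : y = (0 : X) := by
    have h1 : Tendsto (fun α : ℝ => xsol α y) (𝓝[>] (0:ℝ)) (𝓝 y) := by
      refine tendsto_const_nhds.congr' ?_
      filter_upwards [self_mem_nhdsWithin] with α hα
      exact (hxs α hα).symm
    exact tendsto_nhds_unique h1 (htend y)
  -- Step 4: f = J 0 = 0
  apply hf
  have : ‖f‖ = 0 := by rw [← hy, hy0, hJ_norm, norm_zero]
  exact norm_eq_zero.mp this
end

section
/- The integral operator B : L²([0,π]; ℝ) → L²([0,π]; ℝ) defined by (B u)(ζ) = ∫₀^π min{ζ, ω} u(ω) dω is injective: if B u = 0 almost everywhere, then u = 0 in L²([0,π]; ℝ). -/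
open MeasureTheory Real Set
open scoped ENNReal

lemma stmt14_aux_ofReal_max (x : ℝ) : ENNReal.ofReal (max x 0) = ENNReal.ofReal x := by
  rcases le_total x 0 with h | h
  · rw [max_eq_right h, ENNReal.ofReal_zero, eq_comm, ENNReal.ofReal_eq_zero]; exact h
  · rw [max_eq_left h]

lemma stmt14_aux_bottom {g : ℝ → ℝ} (hg : Integrable g volume)
    (h : ∀ a b : ℝ, a < b → ∫ x in Set.Ioc a b, g x = 0) : g =ᵐ[volume] 0 := by
  set F : ℝ → ℝ≥0∞ := fun x => ENNReal.ofReal (g x) with hF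
  set G : ℝ → ℝ≥0∞ := fun x => ENNReal.ofReal (-g x) with hG
  have hFm : AEMeasurable F volume := ENNReal.measurable_ofReal.comp_aemeasurable hg.aemeasurable
  have hGm : AEMeasurable G volume :=
    ENNReal.measurable_ofReal.comp_aemeasurable hg.aemeasurable.neg
  have hsi : ∀ a b : ℝ, a < b → ∫⁻ x in Set.Ioc a b, F x = ∫⁻ x in Set.Ioc a b, G x := by
    intro a b hab
    have h1 : ∫⁻ x in Set.Ioc a b, F x
        = ENNReal.ofReal (∫ x in Set.Ioc a b, max (g x) 0) := by
      rw [ofReal_integral_eq_lintegral_ofReal (hg.pos_part.integrableOn)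
        (Filter.Eventually.of_forall fun x => le_max_right _ _)]
      exact lintegral_congr fun x => (stmt14_aux_ofReal_max (g x)).symm
    have h2 : ∫⁻ x in Set.Ioc a b, G x
        = ENNReal.ofReal (∫ x in Set.Ioc a b, max (-g x) 0) := by
      rw [ofReal_integral_eq_lintegral_ofReal (hg.neg_part.integrableOn)
        (Filter.Eventually.of_forall fun x => le_max_right _ _)]
      exact lintegral_congr fun x => (stmt14_aux_ofReal_max (-g x)).symm
    rw [h1, h2]
    congr 1
    have hsub : ∫ x in Set.Ioc a b, (max (g x) 0 - max (-g x) 0)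
        = (∫ x in Set.Ioc a b, max (g x) 0) - ∫ x in Set.Ioc a b, max (-g x) 0 :=
      integral_sub hg.pos_part.integrableOn hg.neg_part.integrableOn
    have hself : ∫ x in Set.Ioc a b, (max (g x) 0 - max (-g x) 0) = 0 := by
      simp_rw [max_zero_sub_max_neg_zero_eq_self]; exact h a b hab
    have := hsub.symm.trans hself
    linarith [this]
  have hfin : ∫⁻ x, F x ∂volume ≠ ⊤ := by
    have : ∫⁻ x, F x ∂volume ≤ ∫⁻ x, ‖g x‖₊ ∂volume := by
      refine lintegral_mono fun x => ?_
      rw [hF]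
      simp only [← Real.enorm_eq_ofReal_abs]
      exact ENNReal.ofReal_le_of_le_toReal (by simp [abs_nonneg, le_abs_self])
    exact ne_top_of_le_ne_top hg.2.ne this
  have hmeq : volume.withDensity F = volume.withDensity G := by
    refine Measure.ext_of_Ioc' _ _ (fun a b hab => ?_) (fun a b hab => ?_)
    · rw [withDensity_apply _ measurableSet_Ioc]
      exact ne_top_of_le_ne_top hfin (setLIntegral_le_lintegral _ _)
    · rw [withDensity_apply _ measurableSet_Ioc, withDensity_apply _ measurableSet_Ioc]
      exact hsi a b hab
  have hae : F =ᵐ[volume] G := (withDensity_eq_iff_of_sigmaFinite hFm hGm).mp hmeq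
  filter_upwards [hae] with x hx
  by_contra hne
  rcases lt_trichotomy (g x) 0 with hlt | heq | hgt
  · have : F x = 0 := by simp [hF, ENNReal.ofReal_eq_zero]; linarith
    have h2 : G x ≠ 0 := by simp [hG, ENNReal.ofReal_eq_zero]; linarith
    exact h2 (hx ▸ this)
  · exact hne heq
  · have : G x = 0 := by simp [hG, ENNReal.ofReal_eq_zero]; linarith
    have h2 : F x ≠ 0 := by simp [hF, ENNReal.ofReal_eq_zero]; linarith
    exact h2 (hx.symm ▸ this)

/-- The integral operator `(B u)(ζ) = ∫₀^π min(ζ, ω) u(ω) dω` on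
`L²([0,π]; ℝ)` is injective: if `B u = 0` almost everywhere, then `u = 0`. -/
theorem stmt14
    (u : Lp ℝ 2 (volume.restrict (Set.Icc (0:ℝ) π)))
    (h : ∀ᵐ ζ ∂(volume.restrict (Set.Icc (0:ℝ) π)),
      ∫ ω, min ζ ω * u ω ∂(volume.restrict (Set.Icc (0:ℝ) π)) = 0) :
    u = 0 := by
  haveI : IsFiniteMeasure (volume.restrict (Set.Icc (0:ℝ) π)) :=
    ⟨by rw [Measure.restrict_apply_univ]; exact measure_Icc_lt_top⟩
  have hfi : Integrable (⇑u) (volume.restrict (Set.Icc (0:ℝ) π)) :=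
    (Lp.memLp u).integrable (by norm_num)
  set g : ℝ → ℝ := (Set.Icc (0:ℝ) π).indicator (⇑u) with hgdef
  have hg_int : Integrable g volume := (integrable_indicator_iff measurableSet_Icc).2 hfi
  obtain ⟨g', hg'm, hae⟩ : ∃ g', StronglyMeasurable g' ∧ g =ᵐ[volume] g' :=
    ⟨hg_int.1.mk g, hg_int.1.stronglyMeasurable_mk, hg_int.1.ae_eq_mk⟩
  have hg'_int : Integrable g' volume := hg_int.congr hae
  set G : ℝ → ℝ := fun t => ∫ ω in Set.Ici t, g' ω with hGdef
  have hg'zero : ∀ᵐ ω ∂volume, ω ∉ Set.Icc (0:ℝ) π → g' ω = 0 := by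
    filter_upwards [hae] with ω hω hmem
    rw [← hω, hgdef, Set.indicator_of_notMem hmem]
  -- Fubini step
  have key : ∀ ζ ∈ Set.Icc (0:ℝ) π,
      (∫ ω, min ζ ω * u ω ∂(volume.restrict (Set.Icc (0:ℝ) π))) = ∫ t in Set.Ioc 0 ζ, G t := by
    intro ζ hζ
    obtain ⟨hζ0, hζπ⟩ := hζ
    have s1 : (∫ ω, min ζ ω * u ω ∂(volume.restrict (Set.Icc (0:ℝ) π)))
        = ∫ ω, min ζ ω * g' ω := by
      rw [← integral_indicator measurableSet_Icc]
      refine integral_congr_ae ?_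
      filter_upwards [hae] with ω hω
      rw [← hω, hgdef]
      by_cases hmem : ω ∈ Set.Icc (0:ℝ) π
      · simp [Set.indicator_of_mem hmem]
      · simp [Set.indicator_of_notMem hmem]
    set K : ℝ → ℝ → ℝ := fun t ω => if t ∈ Set.Ioc 0 ζ ∧ t ≤ ω then g' ω else 0 with hK
    have hSmeas : MeasurableSet {p : ℝ × ℝ | p.1 ∈ Set.Ioc 0 ζ ∧ p.1 ≤ p.2} :=
      (measurable_fst measurableSet_Ioc).inter (measurableSet_le measurable_fst measurable_snd)
    have hKeq : Function.uncurry K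
        = Set.indicator {p : ℝ × ℝ | p.1 ∈ Set.Ioc 0 ζ ∧ p.1 ≤ p.2} (fun p => g' p.2) := by
      ext p
      simp only [Function.uncurry, hK, Set.indicator_apply, Set.mem_setOf_eq]
    have hKint : Integrable (Function.uncurry K) (volume.prod volume) := by
      have hmeasK : AEStronglyMeasurable (Function.uncurry K) (volume.prod volume) := by
        rw [hKeq]
        exact ((hg'm.comp_measurable measurable_snd).indicator hSmeas).aestronglyMeasurable
      have hdom : Integrable
          (fun p : ℝ × ℝ => (Set.Ioc (0:ℝ) ζ).indicator (fun _ => (1:ℝ)) p.1 * ‖g' p.2‖)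
          (volume.prod volume) := by
        refine Integrable.mul_prod ?_ hg'_int.norm
        rw [integrable_indicator_iff measurableSet_Ioc]
        exact (integrableOn_const measure_Ioc_lt_top.ne)
      refine hdom.mono' hmeasK ?_
      refine Filter.Eventually.of_forall fun p => ?_
      rw [hKeq]
      simp only [Set.indicator_apply, Set.mem_setOf_eq]
      by_cases hp : p.1 ∈ Set.Ioc 0 ζ ∧ p.1 ≤ p.2
      · rw [if_pos hp, if_pos hp.1, one_mul]
      · rw [if_neg hp]
        simp only [norm_zero]
        positivity
    have swap : (∫ t, ∫ ω, K t ω) = ∫ ω, ∫ t, K t ω := integral_integral_swap hKint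
    have inner_t : ∀ᵐ ω ∂(volume : Measure ℝ), (∫ t, K t ω) = min ζ ω * g' ω := by
      filter_upwards [hg'zero] with ω hω
      have hfun : (fun t => K t ω) = Set.indicator (Set.Ioc 0 (min ζ ω)) (fun _ => g' ω) := by
        ext t
        rw [hK]
        by_cases ht : t ∈ Set.Ioc 0 (min ζ ω)
        · rw [Set.indicator_of_mem ht]
          simp only [Set.mem_Ioc] at ht ⊢
          have : (0 < t ∧ t ≤ ζ) ∧ t ≤ ω := ⟨⟨ht.1, ht.2.trans (min_le_left _ _)⟩,
            ht.2.trans (min_le_right _ _)⟩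
          simp [this]
        · rw [Set.indicator_of_notMem ht]
          simp only [Set.mem_Ioc, not_and, not_le] at ht
          have : ¬ ((0 < t ∧ t ≤ ζ) ∧ t ≤ ω) := by
            rintro ⟨⟨h1, h2⟩, h3⟩
            exact absurd (le_min h2 h3) (not_le.2 (ht h1))
          simp [this]
      rw [hfun, integral_indicator_const _ measurableSet_Ioc, measureReal_def, Real.volume_Ioc, smul_eq_mul]
      by_cases hmem : ω ∈ Set.Icc (0:ℝ) π
      · rw [ENNReal.toReal_ofReal (by simp [le_min hζ0 hmem.1])]
        ring
      · rw [hω hmem]; ring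
    have inner_ω : ∀ t, (∫ ω, K t ω) = Set.indicator (Set.Ioc 0 ζ) G t := by
      intro t
      by_cases ht : t ∈ Set.Ioc 0 ζ
      · rw [Set.indicator_of_mem ht]
        have hfun : (fun ω => K t ω) = Set.indicator (Set.Ici t) g' := by
          ext ω
          rw [hK]
          simp only [Set.indicator_apply, Set.mem_Ici]
          by_cases hω : t ≤ ω
          · simp [ht, hω]
          · simp [ht, hω]
        rw [hfun, integral_indicator measurableSet_Ici, hGdef]
      · rw [Set.indicator_of_notMem ht]
        have hfun : (fun ω => K t ω) = fun _ => (0:ℝ) := by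
          ext ω; rw [hK]; simp [ht]
        rw [hfun, integral_zero]
    calc (∫ ω, min ζ ω * u ω ∂(volume.restrict (Set.Icc (0:ℝ) π))) = ∫ ω, min ζ ω * g' ω := s1
      _ = ∫ ω, ∫ t, K t ω := (integral_congr_ae inner_t).symm
      _ = ∫ t, ∫ ω, K t ω := swap.symm
      _ = ∫ t, Set.indicator (Set.Ioc 0 ζ) G t := by
            exact integral_congr_ae (Filter.Eventually.of_forall inner_ω)
      _ = ∫ t in Set.Ioc 0 ζ, G t := integral_indicator measurableSet_Ioc
  -- difference formula for G
  have hIci : ∀ s t : ℝ, s ≤ t → G s = G t + ∫ x in Set.Ico s t, g' x := by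
    intro s t hst
    have hdisj : Disjoint (Set.Ico s t) (Set.Ici t) := by
      rw [Set.disjoint_left]
      rintro x ⟨_, hx⟩ hx2
      exact absurd hx2 (not_le.2 hx)
    have hunion : Set.Ico s t ∪ Set.Ici t = Set.Ici s := Set.Ico_union_Ici_eq_Ici hst
    have : G s = ∫ x in Set.Ico s t ∪ Set.Ici t, g' x := by rw [hunion]
    rw [this, setIntegral_union hdisj measurableSet_Ici hg'_int.integrableOn hg'_int.integrableOn]
    rw [hGdef]
    ring
  -- continuity of G
  have hprim : Continuous fun t => ∫ x in (0:ℝ)..t, g' x := hg'_int.continuous_primitive 0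
  have hGfor : G = fun t => G 0 - ∫ x in (0:ℝ)..t, g' x := by
    funext t
    rcases le_total 0 t with h0 | h0
    · rw [intervalIntegral.integral_of_le h0]
      have h1 := hIci 0 t h0
      have h2 : ∫ x in Set.Ico (0:ℝ) t, g' x = ∫ x in Set.Ioc (0:ℝ) t, g' x := by
        rw [integral_Ico_eq_integral_Ioo, integral_Ioc_eq_integral_Ioo]
      linarith
    · rw [intervalIntegral.integral_of_ge h0]
      have h1 := hIci t 0 h0
      have h2 : ∫ x in Set.Ico t (0:ℝ), g' x = ∫ x in Set.Ioc t (0:ℝ), g' x := by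
        rw [integral_Ico_eq_integral_Ioo, integral_Ioc_eq_integral_Ioo]
      linarith
    
  have hGcont : Continuous G := by rw [hGfor]; exact continuous_const.sub hprim
  -- H and its vanishing
  set H : ℝ → ℝ := fun ζ => ∫ t in (0:ℝ)..ζ, G t with hHdef
  have hHcont : Continuous H :=
    intervalIntegral.continuous_primitive (fun a b => hGcont.intervalIntegrable a b) 0
  have hH0 : Set.EqOn H 0 (Set.Icc 0 π) := by
    refine Measure.eqOn_of_ae_eq (μ := (volume : Measure ℝ)) ?_ hHcont.continuousOn continuousOn_const ?_
    · filter_upwards [h, ae_restrict_mem measurableSet_Icc] with ζ hζ0 hζmem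
      have hk := key ζ hζmem
      rw [hHdef]
      simp only [Pi.zero_apply]
      rw [intervalIntegral.integral_of_le hζmem.1]
      rw [← hk]
      exact hζ0
    · rw [interior_Icc, closure_Ioo (ne_of_lt pi_pos)]
  have hG0 : Set.EqOn G 0 (Set.Icc 0 π) := by
    have hIoo : Set.EqOn G 0 (Set.Ioo 0 π) := by
      intro ζ hζ
      have hderiv : HasDerivAt H (G ζ) ζ :=
        intervalIntegral.integral_hasDerivAt_right (hGcont.intervalIntegrable _ _)
          hGcont.stronglyMeasurable.stronglyMeasurableAtFilter hGcont.continuousAt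
      have hnb : H =ᶠ[nhds ζ] fun _ => (0:ℝ) := by
        filter_upwards [Ioo_mem_nhds hζ.1 hζ.2] with x hx
        exact hH0 (Set.Ioo_subset_Icc_self hx)
      have hzero : HasDerivAt H 0 ζ :=
        (hasDerivAt_const ζ (0:ℝ)).congr_of_eventuallyEq hnb
      exact hderiv.unique hzero
    have := hIoo.closure hGcont continuous_const
    rwa [closure_Ioo (ne_of_lt pi_pos)] at this
  -- interval integrals of g' vanish
  have hints : ∀ a b : ℝ, a < b → ∫ x in Set.Ioc a b, g' x = 0 := by
    intro a b hab
    set a' := max a 0 with ha'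
    set b' := min b π with hb'
    have hseq : (Set.Ioc a b ∩ Set.Icc 0 π : Set ℝ) =ᵐ[volume] (Set.Ico a' b' : Set ℝ) := by
      have h1 : ∀ᵐ x : ℝ ∂volume, x ≠ a' := by
        have := measure_eq_zero_iff_ae_notMem.1 (Real.volume_singleton : volume {a'} = 0)
        filter_upwards [this] with x hx
        simpa [Set.mem_singleton_iff] using hx
      have h2 : ∀ᵐ x : ℝ ∂volume, x ≠ b' := by
        have := measure_eq_zero_iff_ae_notMem.1 (Real.volume_singleton : volume {b'} = 0)
        filter_upwards [this] with x hx
        simpa [Set.mem_singleton_iff] using hx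
      rw [Filter.eventuallyEq_set]
      filter_upwards [h1, h2] with x hxa hxb
      simp only [Set.mem_inter_iff, Set.mem_Ioc, Set.mem_Icc, Set.mem_Ico]
      constructor
      · rintro ⟨⟨hax, hxb2⟩, h0x, hxπ⟩
        have hle : a' ≤ x := max_le hax.le h0x
        have hle2 : x ≤ b' := le_min hxb2 hxπ
        exact ⟨lt_of_le_of_ne hle (Ne.symm hxa) |>.le,
          lt_of_le_of_ne hle2 hxb⟩
      · rintro ⟨ha'x, hxb'⟩
        have hlt : a' < x := lt_of_le_of_ne ha'x (Ne.symm hxa)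
        have h1 : a < x := lt_of_le_of_lt (le_max_left a 0) hlt
        have h2 : 0 < x := lt_of_le_of_lt (le_max_right a 0) hlt
        have h3 : x ≤ b := hxb'.le.trans (min_le_left b π)
        have h4 : x ≤ π := hxb'.le.trans (min_le_right b π)
        exact ⟨⟨h1, h3⟩, h2.le, h4⟩
    have step1 : ∫ x in Set.Ioc a b, g' x = ∫ x in Set.Ioc a b ∩ Set.Icc 0 π, g' x := by
      have e1 : ∫ x in Set.Ioc a b, g' x = ∫ x in Set.Ioc a b, g x :=
        setIntegral_congr_ae measurableSet_Ioc (by filter_upwards [hae] with x hx _; exact hx.symm)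
      have e2 : ∫ x in Set.Ioc a b, g x = ∫ x in Set.Ioc a b ∩ Set.Icc 0 π, (⇑u) x := by
        rw [hgdef, setIntegral_indicator measurableSet_Icc]
      have e3 : ∫ x in Set.Ioc a b ∩ Set.Icc 0 π, (⇑u) x
          = ∫ x in Set.Ioc a b ∩ Set.Icc 0 π, g' x := by
        refine setIntegral_congr_ae (measurableSet_Ioc.inter measurableSet_Icc) ?_
        filter_upwards [hae] with x hx hmem
        rw [← hx, hgdef, Set.indicator_of_mem hmem.2]
      rw [e1, e2, e3]
    rw [step1, setIntegral_congr_set hseq]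
    rcases le_or_gt b' a' with hba | hab'
    · rw [Set.Ico_eq_empty (not_lt.2 hba)]
      simp
    · have hdiff := hIci a' b' hab'.le
      have ha'mem : a' ∈ Set.Icc (0:ℝ) π :=
        ⟨le_max_right a 0, le_trans hab'.le (min_le_right b π)⟩
      have hb'mem : b' ∈ Set.Icc (0:ℝ) π :=
        ⟨le_trans (le_max_right a 0) hab'.le, min_le_right b π⟩
      have hga := hG0 ha'mem
      have hgb := hG0 hb'mem
      simp only [Pi.zero_apply] at hga hgb
      rw [hga, hgb] at hdiff
      linarith
  have hg'0 : g' =ᵐ[volume] 0 := stmt14_aux_bottom hg'_int hints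
  have hg0 : g =ᵐ[volume] 0 := hae.trans hg'0
  have hu0 : (⇑u) =ᵐ[volume.restrict (Set.Icc (0:ℝ) π)] 0 := by
    have hres : g =ᵐ[volume.restrict (Set.Icc (0:ℝ) π)] 0 := ae_restrict_of_ae hg0
    filter_upwards [hres, ae_restrict_mem measurableSet_Icc] with x hx hmem
    rw [hgdef] at hx
    simpa [Set.indicator_of_mem hmem] using hx
  exact (Lp.eq_zero_iff_ae_eq_zero).mpr hu0
end
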